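/- arXiv:2108.09088 — 7 statements merged into one kernel-verified Lean document; each statement's English description precedes it below -/
import Mathlib

section
/- Assume m + p = 2 (so that the assumption on σ reads σ > 2). Then for every ξ0 > ξ_max there is no good profile with interface whose interface point is ξ0. -/
open Real Filter Set Topology

noncomputable def alphaC (m p σ : ℝ) : ℝ := (σ + 2) / (σ * (m - 1) + 2 * (p - 1))

noncomputable def betaC (m p σ : ℝ) : ℝ := (m - p) / (σ * (m - 1) + 2 * (p - 1))

/-- The self-similar profile ODE (SSODE) at the point `ξ`. -/
def SSODE (N : ℕ) (m p σ : ℝ) (f : ℝ → ℝ) (ξ : ℝ) : Prop :=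
  deriv (deriv fun x => f x ^ m) ξ + ((N : ℝ) - 1) / ξ * deriv (fun x => f x ^ m) ξ
    - alphaC m p σ * f ξ + betaC m p σ * ξ * deriv f ξ + ξ ^ σ * f ξ ^ p = 0

/-- `f` is a profile with interface at `ξ0`. -/
def ProfileWithInterface (N : ℕ) (m p σ : ℝ) (f : ℝ → ℝ) (ξ0 : ℝ) : Prop :=
  0 < ξ0 ∧
  ContinuousOn f (Icc 0 ξ0) ∧
  (∀ ξ ∈ Ioo 0 ξ0, 0 < f ξ) ∧
  ContDiffOn ℝ 2 f (Ioo 0 ξ0) ∧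
  (∀ ξ ∈ Ioo 0 ξ0, SSODE N m p σ f ξ) ∧
  f ξ0 = 0 ∧
  Tendsto (fun ξ => deriv (fun x => f x ^ m) ξ) (𝓝[<] ξ0) (𝓝 0)

/-- Interface of Type I: `f(ξ) ~ (ξ0 - ξ)^(1/(m-1))` as `ξ → ξ0⁻`. -/
def TypeI (m : ℝ) (f : ℝ → ℝ) (ξ0 : ℝ) : Prop :=
  ∃ c, 0 < c ∧ Tendsto (fun ξ => f ξ * (ξ0 - ξ) ^ (-(1 / (m - 1)))) (𝓝[<] ξ0) (𝓝 c)

/-- Interface of Type II: `f(ξ) ~ (ξ0 - ξ)^(1/(1-p))` as `ξ → ξ0⁻`. -/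
def TypeII (p : ℝ) (f : ℝ → ℝ) (ξ0 : ℝ) : Prop :=
  ∃ c, 0 < c ∧ Tendsto (fun ξ => f ξ * (ξ0 - ξ) ^ (-(1 / (1 - p)))) (𝓝[<] ξ0) (𝓝 c)

/-- Behavior (B1) at the origin. -/
def BehB1 (N : ℕ) (m p σ : ℝ) (f : ℝ → ℝ) : Prop :=
  0 < f 0 ∧ Tendsto (fun ξ => (f ξ ^ (m - 1) - f 0 ^ (m - 1)) / ξ ^ 2)
    (𝓝[>] 0) (𝓝 (alphaC m p σ * (m - 1) / (2 * m * (N : ℝ))))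

/-- Behavior (B2) at the origin. -/
def BehB2 (N : ℕ) (m : ℝ) (f : ℝ → ℝ) : Prop :=
  f 0 = 0 ∧ Tendsto (fun ξ => f ξ * ξ ^ (-(2 / (m - 1)))) (𝓝[>] 0)
    (𝓝 (((m - 1) / (2 * m * (m * (N : ℝ) - (N : ℝ) + 2))) ^ (1 / (m - 1))))

/-- Behavior (B3) at the origin. -/
def BehB3 (m p σ : ℝ) (f : ℝ → ℝ) : Prop :=
  f 0 = 0 ∧ ∃ K, 0 < K ∧
    Tendsto (fun ξ => f ξ * ξ ^ (-((σ + 2) / (m - p)))) (𝓝[>] 0) (𝓝 K)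

/-- A good profile with interface at `ξ0`. -/
def GoodProfile (N : ℕ) (m p σ : ℝ) (f : ℝ → ℝ) (ξ0 : ℝ) : Prop :=
  ProfileWithInterface N m p σ f ξ0 ∧
  (BehB1 N m p σ f ∨ BehB2 N m f ∨ BehB3 m p σ f)

noncomputable def xiMax (m p σ : ℝ) : ℝ := (betaC m p σ ^ 2 / (4 * m)) ^ (1 / (σ - 2))

lemma rpow_hasDerivAt {f : ℝ → ℝ} {f' x : ℝ} (hf : HasDerivAt f f' x) (hx : 0 < f x) (e : ℝ) :
    HasDerivAt (fun y => f y ^ e) (e * f x ^ (e - 1) * f') x :=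
  (Real.hasDerivAt_rpow_const (x := f x) (p := e) (Or.inl hx.ne')).comp x hf

set_option maxHeartbeats 1000000 in
theorem no_good_profile_beyond_xiMax (m p σ : ℝ) (N : ℕ) (hm : 1 < m) (hp0 : 0 < p) (hp1 : p < 1)
    (hσ : 2 * (1 - p) / (m - 1) < σ) (hN : 1 ≤ N)
    (hmp : m + p = 2) :
    ∀ ξ0 : ℝ, xiMax m p σ < ξ0 → ¬ ∃ f : ℝ → ℝ, GoodProfile N m p σ f ξ0 := by
  have hp2 : p = 2 - m := by linarith
  subst hp2
  intro ξ0 hξmax hex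
  obtain ⟨f, ⟨hξ0pos, hcont, hfpos, hC2, hode, hfz, hder0⟩, -⟩ := hex
  have hm1 : (0:ℝ) < m - 1 := by linarith
  have hm0 : (0:ℝ) < m := by linarith
  have hσ2 : (2:ℝ) < σ := by
    have h1 : 2 * (1 - (2-m)) / (m - 1) = 2 := by
      rw [show 2 * (1 - (2-m)) = (m-1) * 2 by ring]
      field_simp
    linarith [hσ, h1.symm.trans_lt hσ]
  -- the coefficients
  have hbeq : betaC m (2-m) σ = 2 / (σ - 2) := by
    unfold betaC
    rw [show m - (2-m) = (m-1) * 2 by ring,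
      show σ * (m - 1) + 2 * (2 - m - 1) = (m-1)*(σ-2) by ring]
    rw [mul_div_mul_left _ _ (by linarith : m - 1 ≠ 0)]
  have hbpos : 0 < betaC m (2-m) σ := by
    rw [hbeq]; exact div_pos (by norm_num) (by linarith)
  have hapos : 0 < alphaC m (2-m) σ := by
    unfold alphaC
    rw [show σ * (m - 1) + 2 * (2 - m - 1) = (m-1)*(σ-2) by ring]
    exact div_pos (by linarith) (by nlinarith)
  -- the discriminant gap
  have hx2 : betaC m (2-m) σ ^ 2 / (4*m) < ξ0 ^ (σ - 2) := by
    set c0 := betaC m (2-m) σ ^ 2 / (4*m) with hc0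
    have hc0p : 0 < c0 := by
      rw [hc0, hbeq]
      exact div_pos (pow_pos (div_pos (by norm_num) (by linarith)) 2) (by linarith)
    have h1 : (c0 ^ (1/(σ-2))) ^ (σ - 2) < ξ0 ^ (σ-2) :=
      Real.rpow_lt_rpow (Real.rpow_nonneg hc0p.le _) hξmax (by linarith)
    rwa [← Real.rpow_mul hc0p.le, one_div, inv_mul_cancel₀ (by linarith : σ - 2 ≠ 0),
      Real.rpow_one] at h1
  set aC := alphaC m (2-m) σ with haCdef
  set bC := betaC m (2-m) σ with hbCdef
  set D : ℝ := 4*m*ξ0^σ - bC^2*ξ0^2 with hDdef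
  have hD : 0 < D := by
    have hsplit : ξ0^σ = ξ0^(σ-2) * ξ0^2 := by
      rw [← Real.rpow_two, ← Real.rpow_add hξ0pos]
      norm_num
    rw [hDdef, hsplit]
    have h2 : (0:ℝ) < ξ0^2 := by positivity
    have h3 : bC^2 < ξ0^(σ-2) * (4*m) := by
      rw [div_lt_iff₀ (by positivity)] at hx2; linarith
    nlinarith [mul_lt_mul_of_pos_right h3 h2]
  -- basic limits at the interface
  have hfz0 : Tendsto f (𝓝[<] ξ0) (𝓝 0) := by
    have h1 : ContinuousWithinAt f (Icc 0 ξ0) ξ0 := hcont ξ0 ⟨hξ0pos.le, le_refl _⟩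
    have h2 : Tendsto f (𝓝[Icc 0 ξ0] ξ0) (𝓝 (f ξ0)) := h1
    rw [hfz] at h2
    refine h2.mono_left ?_
    rw [← nhdsWithin_Ioo_eq_nhdsLT hξ0pos]
    exact nhdsWithin_mono _ Ioo_subset_Icc_self
  have hv0 : Tendsto (fun x => f x ^ (m-1)) (𝓝[<] ξ0) (𝓝 0) := by
    have := hfz0.rpow_const (p := m - 1) (Or.inr hm1.le)
    rwa [Real.zero_rpow (by linarith : m - 1 ≠ 0)] at this
  -- derivative infrastructure
  have hIopen : IsOpen (Ioo (0:ℝ) ξ0) := isOpen_Ioo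
  have hdf : ∀ x ∈ Ioo (0:ℝ) ξ0, HasDerivAt f (deriv f x) x := fun x hx =>
    ((hC2.differentiableOn (by norm_num)).differentiableAt (hIopen.mem_nhds hx)).hasDerivAt
  have hC2' : ContDiffOn ℝ 1 (deriv f) (Ioo (0:ℝ) ξ0) := hC2.deriv_of_isOpen hIopen (by norm_num)
  have hdf2 : ∀ x ∈ Ioo (0:ℝ) ξ0, HasDerivAt (deriv f) (deriv (deriv f) x) x := fun x hx =>
    ((hC2'.differentiableOn (by norm_num)).differentiableAt (hIopen.mem_nhds hx)).hasDerivAt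
  have hcontf' : ContinuousOn (deriv f) (Ioo (0:ℝ) ξ0) := hC2'.continuousOn
  have hFm : ∀ x ∈ Ioo (0:ℝ) ξ0,
      HasDerivAt (fun y => f y ^ m) (m * f x ^ (m-1) * deriv f x) x := fun x hx =>
    rpow_hasDerivAt (hdf x hx) (hfpos x hx) m
  have hFm' : ∀ x ∈ Ioo (0:ℝ) ξ0,
      deriv (fun y => f y ^ m) x = m * f x ^ (m-1) * deriv f x := fun x hx => (hFm x hx).deriv
  have hFm2 : ∀ x ∈ Ioo (0:ℝ) ξ0,
      HasDerivAt (deriv (fun y => f y ^ m))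
        (m*(m-1)*(f x^(m-2))*(deriv f x)^2 + m*(f x^(m-1))*(deriv (deriv f) x)) x := by
    intro x hx
    have hev : deriv (fun y => f y ^ m) =ᶠ[𝓝 x] (fun y => m * f y ^ (m-1) * deriv f y) := by
      filter_upwards [hIopen.mem_nhds hx] with y hy
      exact hFm' y hy
    have h1 : HasDerivAt (fun y => m * f y ^ (m-1) * deriv f y)
        (m*(m-1)*(f x^(m-2))*(deriv f x)^2 + m*(f x^(m-1))*(deriv (deriv f) x)) x := by
      have h2 := ((rpow_hasDerivAt (hdf x hx) (hfpos x hx) (m-1)).const_mul m).mul (hdf2 x hx)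
      refine h2.congr_deriv ?_
      rw [show m - 1 - 1 = m - 2 by ring]
      ring
    exact h1.congr_of_eventuallyEq hev
  -- the master pointwise identity
  have hE : ∀ x ∈ Ioo (0:ℝ) ξ0,
      m*(m-1)*(f x^(m-2))*(deriv f x)^2 + m*(f x^(m-1))*(deriv (deriv f) x)
        + ((N:ℝ)-1)/x * (m * (f x^(m-1)) * deriv f x)
        - aC * f x + bC * x * deriv f x + x^σ * (f x^(2-m)) = 0 := by
    intro x hx
    have h0 := hode x hx
    unfold SSODE at h0
    rw [(hFm2 x hx).deriv, hFm' x hx] at h0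
    rw [← haCdef, ← hbCdef] at h0
    linear_combination h0
  -- constants
  set C4 : ℝ := bC*ξ0/m + 1 with hC4def
  have hC4pos : 0 < C4 := by
    have h1 : 0 < bC*ξ0/m := div_pos (mul_pos hbpos hξ0pos) hm0
    rw [hC4def]; linarith
  set K : ℝ := (m-1)*C4 with hKdef
  have hKpos : 0 < K := mul_pos hm1 hC4pos
  have hN0 : (0:ℝ) ≤ (N:ℝ) - 1 := by
    have h1 : (1:ℝ) ≤ (N:ℝ) := by exact_mod_cast hN
    linarith
  set CN : ℝ := ((N:ℝ)-1)/ξ0 + 1 with hCNdef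
  have hCNpos : 0 < CN := by
    have h1 : 0 ≤ ((N:ℝ)-1)/ξ0 := div_nonneg hN0 hξ0pos.le
    rw [hCNdef]; linarith
  set c3 : ℝ := (m-1)^2*D/(16*m) with hc3def
  have hc3pos : 0 < c3 := div_pos (by nlinarith [mul_pos (mul_pos hm1 hm1) hD]) (by linarith)
  set c7 : ℝ := c3/(m*(m-1)*K) with hc7def
  have hc7pos : 0 < c7 := div_pos hc3pos (mul_pos (mul_pos hm0 hm1) hKpos)
  set C5 : ℝ := CN*K with hC5def
  have hC5pos : 0 < C5 := mul_pos hCNpos hKpos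
  clear_value aC bC D C4 K CN c3 c7 C5
  -- tendsto pieces
  have tξ : Tendsto (fun x : ℝ => x) (𝓝[<] ξ0) (𝓝 ξ0) := tendsto_id.mono_left nhdsWithin_le_nhds
  have tpow : Tendsto (fun x : ℝ => x^σ) (𝓝[<] ξ0) (𝓝 (ξ0^σ)) :=
    ((Real.continuousAt_rpow_const ξ0 σ (Or.inl hξ0pos.ne')).tendsto).mono_left nhdsWithin_le_nhds
  have tsq : Tendsto (fun x : ℝ => x^2) (𝓝[<] ξ0) (𝓝 (ξ0^2)) :=
    (((continuous_pow 2).tendsto ξ0)).mono_left nhdsWithin_le_nhds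
  have tinv : Tendsto (fun x : ℝ => ((N:ℝ)-1)/x) (𝓝[<] ξ0) (𝓝 (((N:ℝ)-1)/ξ0)) :=
    tendsto_const_nhds.div tξ hξ0pos.ne'
  -- the eventual window
  have hIoi : ∀ᶠ x in 𝓝[<] ξ0, x ∈ Ioo (0:ℝ) ξ0 := by
    have h1 : ∀ᶠ x in 𝓝[<] ξ0, x ∈ Iio ξ0 := eventually_mem_nhdsWithin
    have h2 : ∀ᶠ x in 𝓝[<] ξ0, 0 < x :=
      Filter.Eventually.filter_mono nhdsWithin_le_nhds (eventually_gt_nhds hξ0pos)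
    filter_upwards [h1, h2] with x h1 h2
    exact ⟨h2, h1⟩
  have hP2ev : ∀ᶠ x in 𝓝[<] ξ0, bC^2*x^2 + 4*m*aC*(f x^(m-1)) < 4*m*x^σ - D/4 := by
    have ht : Tendsto (fun x => 4*m*x^σ - D/4 - (bC^2*x^2 + 4*m*aC*(f x^(m-1)))) (𝓝[<] ξ0)
        (𝓝 (4*m*ξ0^σ - D/4 - (bC^2*ξ0^2 + 4*m*aC*0))) :=
      ((tpow.const_mul (4*m)).sub tendsto_const_nhds).sub
        ((tsq.const_mul (bC^2)).add (hv0.const_mul (4*m*aC)))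
    have hlim : (0:ℝ) < 4*m*ξ0^σ - D/4 - (bC^2*ξ0^2 + 4*m*aC*0) := by
      have : D = 4*m*ξ0^σ - bC^2*ξ0^2 := hDdef
      linarith [hD]
    filter_upwards [ht.eventually (eventually_gt_nhds hlim)] with x hx
    linarith
  have hP3ev : ∀ᶠ x in 𝓝[<] ξ0, bC*x + ((N:ℝ)-1)/x * (f x^(m-1)) * m < m*C4 := by
    have ht : Tendsto (fun x => bC*x + ((N:ℝ)-1)/x * (f x^(m-1)) * m) (𝓝[<] ξ0)
        (𝓝 (bC*ξ0 + ((N:ℝ)-1)/ξ0 * 0 * m)) := (tξ.const_mul bC).add ((tinv.mul hv0).mul_const m)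
    have hmC4 : m*C4 = bC*ξ0 + m := by
      rw [hC4def]
      field_simp
    have hlim : bC*ξ0 + ((N:ℝ)-1)/ξ0 * 0 * m < m*C4 := by
      rw [hmC4]; linarith
    exact ht.eventually (eventually_lt_nhds hlim)
  have hP4ev : ∀ᶠ x in 𝓝[<] ξ0, ((N:ℝ)-1)/x < CN := by
    have hlim : ((N:ℝ)-1)/ξ0 < CN := by rw [hCNdef]; linarith
    exact tinv.eventually (eventually_lt_nhds hlim)
  have hall : ∀ᶠ x in 𝓝[<] ξ0, x ∈ Ioo (0:ℝ) ξ0 ∧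
      (bC^2*x^2 + 4*m*aC*(f x^(m-1)) < 4*m*x^σ - D/4) ∧
      (bC*x + ((N:ℝ)-1)/x * (f x^(m-1)) * m < m*C4) ∧ (((N:ℝ)-1)/x < CN) := by
    filter_upwards [hIoi, hP2ev, hP3ev, hP4ev] with x h1 h2 h3 h4
    exact ⟨h1, h2, h3, h4⟩
  obtain ⟨a, ha, hPsub⟩ := mem_nhdsLT_iff_exists_Ioo_subset.mp hall
  have hP : ∀ x ∈ Ioo a ξ0, x ∈ Ioo (0:ℝ) ξ0 ∧
      (bC^2*x^2 + 4*m*aC*(f x^(m-1)) < 4*m*x^σ - D/4) ∧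
      (bC*x + ((N:ℝ)-1)/x * (f x^(m-1)) * m < m*C4) ∧ (((N:ℝ)-1)/x < CN) := fun x hx => hPsub hx
  -- Step 4: f' is eventually negative
  have S4a : ∀ x ∈ Ioo a ξ0, deriv f x = 0 → deriv (deriv f) x < 0 := by
    intro x hx hdx
    obtain ⟨hxI, hP2, hP3, hP4⟩ := hP x hx
    have hF : 0 < f x := hfpos x hxI
    have hE0 := hE x hxI
    rw [hdx] at hE0
    have hW : 0 < x^σ := Real.rpow_pos_of_pos hxI.1 σ
    have h2m : 0 < f x^(2-m) := Real.rpow_pos_of_pos hF _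
    have hm2 : 0 < f x^(m-1) := Real.rpow_pos_of_pos hF _
    have hrel : f x^(m-1) * f x^(2-m) = f x := by
      rw [← Real.rpow_add hF]; norm_num
    have hav : aC * (f x^(m-1)) < x^σ := by
      have h1 : 4*m*(aC * (f x^(m-1))) < 4*m*(x^σ) := by
        have hsq : 0 ≤ (bC*x)^2 := sq_nonneg (bC*x)
        linarith [hP2, hD, hsq]
      exact lt_of_mul_lt_mul_left h1 (by linarith)
    have h2 : aC * f x < x^σ * (f x^(2-m)) := by
      calc aC * f x = aC * (f x^(m-1)) * (f x^(2-m)) := by rw [mul_assoc, hrel]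
      _ < x^σ * (f x^(2-m)) := mul_lt_mul_of_pos_right hav h2m
    by_contra hcon
    push_neg at hcon
    have h3 : 0 ≤ m*(f x^(m-1))*(deriv (deriv f) x) := mul_nonneg (mul_pos hm0 hm2).le hcon
    have hE0' : m*(f x^(m-1))*(deriv (deriv f) x) - aC*(f x) + x^σ*(f x^(2-m)) = 0 := by
      linear_combination hE0
    linarith
  set ξA : ℝ := (a + ξ0)/2 with hξAdef
  have hξA : ξA ∈ Ioo a ξ0 := ⟨by rw [hξAdef]; linarith [ha.out], by rw [hξAdef]; linarith [ha.out]⟩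
  have hfa : 0 < f ξA := hfpos ξA (hP ξA hξA).1
  have hevB : ∀ᶠ x in 𝓝[<] ξ0, f x < f ξA ∧ x ∈ Ioo ξA ξ0 := by
    filter_upwards [hfz0.eventually (eventually_lt_nhds hfa),
      Ioo_mem_nhdsLT_of_mem (⟨hξA.2, le_refl ξ0⟩ : ξ0 ∈ Ioc ξA ξ0)] with x h1 h2
    exact ⟨h1, h2⟩
  obtain ⟨ξB, hfB, hξB⟩ := hevB.exists
  have hsub0 : Ioo ξA ξB ⊆ Ioo (0:ℝ) ξ0 := fun y hy =>
    ⟨lt_trans (hP ξA hξA).1.1 hy.1, lt_trans hy.2 hξB.2⟩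
  obtain ⟨c, hcmem, hcslope⟩ := exists_deriv_eq_slope f hξB.1
    (hcont.mono (fun y hy => ⟨le_trans (hP ξA hξA).1.1.le hy.1, le_trans hy.2 hξB.2.le⟩))
    (fun y hy => ((hdf y (hsub0 hy)).differentiableAt.differentiableWithinAt))
  have hcIoo : c ∈ Ioo a ξ0 := ⟨lt_trans hξA.1 hcmem.1, lt_trans hcmem.2 hξB.2⟩
  have hc0 : deriv f c < 0 := by
    rw [hcslope]
    exact div_neg_of_neg_of_pos (by linarith) (by linarith [hcmem.1, hξB.1])
  have S4c : ∀ x ∈ Ico c ξ0, deriv f x < 0 := by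
    by_contra hcon
    push_neg at hcon
    obtain ⟨d, hd, hd0⟩ := hcon
    have hdI : d ∈ Ioo a ξ0 := ⟨lt_of_lt_of_le hcIoo.1 hd.1, hd.2⟩
    have hdc : c < d := by
      rcases lt_or_eq_of_le hd.1 with h | h
      · exact h
      · exfalso; rw [← h] at hd0; linarith
    set S : Set ℝ := {y | y ∈ Icc c d ∧ 0 ≤ deriv f y} with hSdef
    have hdS : d ∈ S := ⟨⟨hdc.le, le_refl d⟩, hd0⟩
    have hSbdd : BddBelow S := ⟨c, fun y hy => hy.1.1⟩
    set t := sInf S with htdef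
    have htmem : t ∈ Icc c d := ⟨le_csInf ⟨d, hdS⟩ (fun y hy => hy.1.1), csInf_le hSbdd hdS⟩
    have htI : t ∈ Ioo a ξ0 := ⟨lt_of_lt_of_le hcIoo.1 htmem.1, lt_of_le_of_lt htmem.2 hd.2⟩
    have htI0 : t ∈ Ioo (0:ℝ) ξ0 := (hP t htI).1
    have hcontt : ContinuousAt (deriv f) t := hcontf'.continuousAt (hIopen.mem_nhds htI0)
    have ht0 : 0 ≤ deriv f t := by
      by_contra hlt
      push_neg at hlt
      have hev : ∀ᶠ y in 𝓝 t, deriv f y < 0 := hcontt (Iio_mem_nhds hlt)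
      obtain ⟨ε, hε, hball⟩ := Metric.eventually_nhds_iff.mp hev
      have hex : ∃ s ∈ S, s < t + ε := by
        by_contra hno
        push_neg at hno
        have h1 : t + ε ≤ t := le_csInf ⟨d, hdS⟩ hno
        linarith
      obtain ⟨s, hsS, hs⟩ := hex
      have hts : t ≤ s := csInf_le hSbdd hsS
      have hdist : dist s t < ε := by
        rw [Real.dist_eq, abs_of_nonneg (by linarith)]
        linarith
      exact absurd hsS.2 (not_le.mpr (hball hdist))
    have htc : c < t := by
      rcases lt_or_eq_of_le htmem.1 with h | h
      · exact h
      · exfalso; rw [← h] at ht0; linarith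
    have hneg : ∀ y ∈ Ico c t, deriv f y < 0 := by
      intro y hy
      by_contra h'
      push_neg at h'
      have hyS : y ∈ S := ⟨⟨hy.1, le_trans hy.2.le htmem.2⟩, h'⟩
      exact absurd (csInf_le hSbdd hyS) (not_le.mpr hy.2)
    have hteq : deriv f t = 0 := by
      refine le_antisymm ?_ ht0
      have htt : Tendsto (deriv f) (𝓝[<] t) (𝓝 (deriv f t)) :=
        hcontt.tendsto.mono_left nhdsWithin_le_nhds
      refine le_of_tendsto htt ?_
      filter_upwards [Ioo_mem_nhdsLT_of_mem (⟨htc, le_refl t⟩ : t ∈ Ioc c t)] with y hy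
      exact (hneg y ⟨hy.1.le, hy.2⟩).le
    have hd2 : 0 ≤ deriv (deriv f) t := by
      have h1 : HasDerivWithinAt (deriv f) (deriv (deriv f) t) (Iio t) t :=
        (hdf2 t htI0).hasDerivWithinAt
      rw [hasDerivWithinAt_iff_tendsto_slope] at h1
      rw [show Iio t \ {t} = Iio t from by simp] at h1
      refine ge_of_tendsto h1 ?_
      filter_upwards [Ioo_mem_nhdsLT_of_mem (⟨htc, le_refl t⟩ : t ∈ Ioc c t)] with y hy
      rw [slope_def_field, hteq, sub_zero]
      exact le_of_lt (div_pos_of_neg_of_neg (hneg y ⟨hy.1.le, hy.2⟩) (by linarith [hy.2]))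
    exact absurd (S4a t htI hteq) (not_lt.mpr hd2)
  have hsubca : Ioo c ξ0 ⊆ Ioo a ξ0 := fun y hy => ⟨lt_trans hcIoo.1 hy.1, hy.2⟩
  -- Step 5: u = (1-m) f^(m-2) f' exceeds K somewhere
  have hu_pos : ∀ x ∈ Ioo c ξ0, 0 < (1-m)*((f x^(m-2)) * deriv f x) := by
    intro x hx
    have hA := S4c x ⟨hx.1.le, hx.2⟩
    have hFP : 0 < f x^(m-2) := Real.rpow_pos_of_pos (hfpos x (hP x (hsubca hx)).1) _
    exact mul_pos_of_neg_of_neg (by linarith) (mul_neg_of_pos_of_neg hFP hA)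
  have hu_deriv : ∀ x ∈ Ioo a ξ0, HasDerivAt (fun y => (1-m) * ((f y^(m-2)) * deriv f y))
      ((1-m)*((m-2)*(f x^(m-3))*(deriv f x)^2 + (f x^(m-2))*(deriv (deriv f) x))) x := by
    intro x hx
    have hxI := (hP x hx).1
    have h1 := (rpow_hasDerivAt (hdf x hxI) (hfpos x hxI) (m-2)).mul (hdf2 x hxI)
    have h2 := h1.const_mul (1-m)
    refine h2.congr_deriv ?_
    rw [show m-2-1 = m-3 by ring]
    ring
  have hbig : ∃ w ∈ Ioo c ξ0, K < (1-m) * ((f w^(m-2)) * deriv f w) := by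
    by_contra hno
    push_neg at hno
    -- (5a) linear bound on v = f^(m-1)
    have hvK : ∀ x ∈ Ioo c ξ0, f x^(m-1) ≤ K*(ξ0-x) := by
      intro x hx
      have hstep : ∀ t ∈ Ioo x ξ0, f x^(m-1) - K*(ξ0-x) ≤ f t^(m-1) := by
        intro t ht
        have hsub1 : Icc x t ⊆ Ioo (0:ℝ) ξ0 := fun y hy =>
          ⟨lt_of_lt_of_le (hP x (hsubca hx)).1.1 hy.1, lt_of_le_of_lt hy.2 ht.2⟩
        have hcontv : ContinuousOn (fun y => f y^(m-1)) (Icc x t) := by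
          apply ContinuousOn.rpow_const
          · exact hcont.mono (fun y hy => ⟨(hsub1 hy).1.le, (hsub1 hy).2.le⟩)
          · intro y _
            exact Or.inr (by linarith)
        have hdiffv : DifferentiableOn ℝ (fun y => f y^(m-1)) (Ioo x t) := fun y hy =>
          ((rpow_hasDerivAt (hdf y (hsub1 (Ioo_subset_Icc_self hy)))
            (hfpos y (hsub1 (Ioo_subset_Icc_self hy))) (m-1)).differentiableAt).differentiableWithinAt
        obtain ⟨θ, hθ, hθs⟩ := exists_deriv_eq_slope (fun y => f y^(m-1)) ht.1 hcontv hdiffv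
        have hθI : θ ∈ Ioo c ξ0 := ⟨lt_trans hx.1 hθ.1, lt_trans hθ.2 ht.2⟩
        have hθ0 : θ ∈ Ioo (0:ℝ) ξ0 := (hP θ (hsubca hθI)).1
        have hθd : deriv (fun y => f y^(m-1)) θ = (m-1)*(f θ^(m-2))*deriv f θ := by
          rw [(rpow_hasDerivAt (hdf θ hθ0) (hfpos θ hθ0) (m-1)).deriv, show m-1-1 = m-2 by ring]
        have hKθ := hno θ hθI
        have hslope_ge : -K ≤ (f t^(m-1) - f x^(m-1))/(t-x) := by
          rw [← hθs, hθd]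
          linarith [hKθ]
        have htx : (0:ℝ) < t - x := by linarith [ht.1]
        have h2 := (le_div_iff₀ htx).mp hslope_ge
        have h3 : K*(t-x) ≤ K*(ξ0-x) :=
          mul_le_mul_of_nonneg_left (by linarith [ht.2]) hKpos.le
        linarith [h2, h3]
      have hfinal : f x^(m-1) - K*(ξ0-x) ≤ 0 := by
        refine ge_of_tendsto hv0 ?_
        filter_upwards [Ioo_mem_nhdsLT_of_mem (⟨hx.2, le_refl ξ0⟩ : ξ0 ∈ Ioc x ξ0)] with t ht
        exact hstep t ht
      linarith
    -- (5b) lower bound for the derivative of u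
    have hDU : ∀ x ∈ Ioo c ξ0,
        c7/(ξ0-x) - C5 ≤ (1-m)*((m-2)*(f x^(m-3))*(deriv f x)^2 + (f x^(m-2))*(deriv (deriv f) x)) := by
      intro x hx
      obtain ⟨hxI, hP2, hP3, hP4⟩ := hP x (hsubca hx)
      have hF : 0 < f x := hfpos x hxI
      have hx0 : 0 < x := hxI.1
      have hFP : 0 < f x^(m-2) := Real.rpow_pos_of_pos hF _
      have hW : 0 < x^σ := Real.rpow_pos_of_pos hx0 σ
      have hA : deriv f x < 0 := S4c x ⟨hx.1.le, hx.2⟩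
      have hU : 0 < (1-m)*((f x^(m-2)) * deriv f x) := hu_pos x hx
      have hUK : (1-m)*((f x^(m-2)) * deriv f x) ≤ K := hno x hx
      have r1 : f x^(m-1) = f x^(m-2) * f x := by
        rw [show m-1 = (m-2)+1 by ring, Real.rpow_add hF, Real.rpow_one]
      have r2 : f x^(m-3) * f x = f x^(m-2) := by
        rw [show m-2 = (m-3)+1 by ring, Real.rpow_add hF, Real.rpow_one]
      have r3 : f x^(2-m) * f x^(m-2) = 1 := by
        rw [← Real.rpow_add hF]
        norm_num
      have hvK' : (f x^(m-2))*(f x) ≤ K*(ξ0-x) := by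
        have h1 := hvK x hx
        rwa [r1] at h1
      have hvpos : 0 < (f x^(m-2))*(f x) := mul_pos hFP hF
      have hE0 := hE x hxI
      rw [r1] at hE0
      have hP2' : bC^2*x^2 + 4*m*aC*((f x^(m-2))*(f x)) < 4*m*x^σ - D/4 := by
        rw [r1] at hP2
        linarith [hP2]
      have key : m*(m-1)*((f x^(m-2))*(f x)) *
          ((1-m)*((m-2)*(f x^(m-3))*(deriv f x)^2 + (f x^(m-2))*(deriv (deriv f) x))
            + ((N:ℝ)-1)/x * ((1-m)*((f x^(m-2)) * deriv f x)))
          = m*((1-m)*((f x^(m-2)) * deriv f x))^2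
            - bC*(m-1)*x*((1-m)*((f x^(m-2)) * deriv f x))
            + (m-1)^2*(x^σ) - (m-1)^2*aC*((f x^(m-2))*(f x)) := by
        linear_combination (-(m-1)^2*(f x^(m-2))) * hE0
          + (-((m-1)^2*m*(m-2)*(f x^(m-2))*(deriv f x)^2)) * r2
          + ((m-1)^2*(x^σ)) * r3
      have hgap : 0 < 4*m*x^σ - D/4 - (bC^2*x^2 + 4*m*aC*((f x^(m-2))*(f x))) := by linarith
      have hc3' : c3*(16*m) = (m-1)^2*D := by
        rw [hc3def]
        field_simp
      have hQ4 : 0 ≤ 4*m*((m*((1-m)*((f x^(m-2)) * deriv f x))^2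
            - bC*(m-1)*x*((1-m)*((f x^(m-2)) * deriv f x))
            + (m-1)^2*(x^σ) - (m-1)^2*aC*((f x^(m-2))*(f x))) - c3) := by
        have hsq : 0 ≤ (2*m*((1-m)*((f x^(m-2)) * deriv f x)) - bC*(m-1)*x)^2 :=
          sq_nonneg _
        have hgap2 : 0 < (m-1)*((m-1)*(4*m*x^σ - D/4 - (bC^2*x^2 + 4*m*aC*((f x^(m-2))*(f x))))) :=
          mul_pos hm1 (mul_pos hm1 hgap)
        linarith [hsq, hgap2, hc3']
      have hQ : c3 ≤ m*((1-m)*((f x^(m-2)) * deriv f x))^2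
            - bC*(m-1)*x*((1-m)*((f x^(m-2)) * deriv f x))
            + (m-1)^2*(x^σ) - (m-1)^2*aC*((f x^(m-2))*(f x)) := by
        have h4 := (mul_nonneg_iff_of_pos_left (show (0:ℝ) < 4*m by linarith)).mp hQ4
        linarith [h4]
      have hmv : 0 < m*(m-1)*((f x^(m-2))*(f x)) := mul_pos (mul_pos hm0 hm1) hvpos
      have hsum : c3/(m*(m-1)*((f x^(m-2))*(f x))) ≤
          (1-m)*((m-2)*(f x^(m-3))*(deriv f x)^2 + (f x^(m-2))*(deriv (deriv f) x))
            + ((N:ℝ)-1)/x * ((1-m)*((f x^(m-2)) * deriv f x)) := by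
        rw [div_le_iff₀ hmv]
        linarith [key, hQ]
      have hEU : ((N:ℝ)-1)/x * ((1-m)*((f x^(m-2)) * deriv f x)) ≤ CN*K :=
        mul_le_mul hP4.le hUK hU.le hCNpos.le
      have hle2 : m*(m-1)*((f x^(m-2))*(f x)) ≤ m*(m-1)*K*(ξ0-x) := by
        linarith [mul_nonneg (mul_pos hm0 hm1).le (sub_nonneg.mpr hvK')]
      have hd1 : c7/(ξ0-x) = c3/(m*(m-1)*K*(ξ0-x)) := by
        rw [hc7def, div_div]
      have hd2 : c3/(m*(m-1)*K*(ξ0-x)) ≤ c3/(m*(m-1)*((f x^(m-2))*(f x))) :=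
        div_le_div_of_nonneg_left hc3pos.le hmv hle2
      rw [hC5def]
      rw [hd1]
      linarith [hsum, hEU, hd2]
    -- (5c) the auxiliary function ψ is monotone, contradiction
    have hcξ : c < ξ0 := hcIoo.2
    set c1 : ℝ := (c+ξ0)/2 with hc1def
    have hc1 : c1 ∈ Ioo c ξ0 := ⟨by rw [hc1def]; linarith, by rw [hc1def]; linarith⟩
    have hψd : ∀ y ∈ Ioo c ξ0, HasDerivAt
        (fun t => (1-m) * ((f t^(m-2)) * deriv f t) + c7*Real.log (ξ0-t) + C5*t)
        ((1-m)*((m-2)*(f y^(m-3))*(deriv f y)^2 + (f y^(m-2))*(deriv (deriv f) y))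
          + c7*((ξ0-y)⁻¹*(-1)) + C5*1) y := by
      intro y hy
      have h1 : HasDerivAt (fun t : ℝ => ξ0 - t) (-1) y := (hasDerivAt_id y).const_sub ξ0
      have h2 : HasDerivAt (fun t => Real.log (ξ0 - t)) ((ξ0-y)⁻¹*(-1)) y :=
        (Real.hasDerivAt_log (by linarith [hy.2] : ξ0 - y ≠ 0)).comp y h1
      exact ((hu_deriv y (hsubca hy)).add (h2.const_mul c7)).add ((hasDerivAt_id y).const_mul C5)
    have hψmono : MonotoneOn
        (fun t => (1-m) * ((f t^(m-2)) * deriv f t) + c7*Real.log (ξ0-t) + C5*t) (Ico c1 ξ0) := by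
      apply monotoneOn_of_deriv_nonneg (convex_Ico c1 ξ0)
      · intro y hy
        exact ((hψd y ⟨lt_of_lt_of_le hc1.1 hy.1, hy.2⟩).continuousAt).continuousWithinAt
      · intro y hy
        rw [interior_Ico] at hy
        exact ((hψd y ⟨lt_trans hc1.1 hy.1, hy.2⟩).differentiableAt).differentiableWithinAt
      · intro y hy
        rw [interior_Ico] at hy
        have hyc : y ∈ Ioo c ξ0 := ⟨lt_trans hc1.1 hy.1, hy.2⟩
        rw [(hψd y hyc).deriv]
        have hdu := hDU y hyc
        have hinv : c7*((ξ0-y)⁻¹*(-1)) = -(c7/(ξ0-y)) := by ring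
        rw [hinv]
        linarith [hdu]
    obtain ⟨R, hRdef⟩ : ∃ R:ℝ, R = ((1-m)*((f c1^(m-2))*deriv f c1) + c7*Real.log (ξ0-c1)
        + C5*c1 - C5*ξ0 - (K+1))/c7 := ⟨_, rfl⟩
    set t0 : ℝ := max ((c1+ξ0)/2) (ξ0 - Real.exp R) with ht0def
    have hc1ξ : c1 < ξ0 := hc1.2
    have ht0a : c1 < t0 := lt_of_lt_of_le (by linarith) (le_max_left _ _)
    have ht0b : t0 < ξ0 := max_lt (by linarith) (by linarith [Real.exp_pos R])
    have ht0c : ξ0 - t0 ≤ Real.exp R := by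
      have := le_max_right ((c1+ξ0)/2) (ξ0 - Real.exp R)
      rw [ht0def]
      linarith [this]
    have hlog : Real.log (ξ0 - t0) ≤ R := (Real.log_le_iff_le_exp (by linarith)).mpr ht0c
    have hmono := hψmono (show c1 ∈ Ico c1 ξ0 from ⟨le_refl _, hc1ξ⟩)
      (show t0 ∈ Ico c1 ξ0 from ⟨ht0a.le, ht0b⟩) ht0a.le
    have ht0K : (1-m)*((f t0^(m-2))*deriv f t0) ≤ K := hno t0 ⟨lt_trans hc1.1 ht0a, ht0b⟩
    have hc7R : c7*R = (1-m)*((f c1^(m-2))*deriv f c1) + c7*Real.log (ξ0-c1)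
        + C5*c1 - C5*ξ0 - (K+1) := by
      rw [hRdef, mul_comm, div_mul_cancel₀ _ hc7pos.ne']
    have hint1 : c7*Real.log (ξ0-t0) ≤ c7*R := mul_le_mul_of_nonneg_left hlog hc7pos.le
    have hint2 : C5*t0 ≤ C5*ξ0 := mul_le_mul_of_nonneg_left ht0b.le hC5pos.le
    simp only at hmono
    linarith [hmono, hint1, hint2, hc7R, ht0K]
  -- Step 6: the monotone functional G gives the contradiction
  obtain ⟨w, hw, hwK⟩ := hbig
  have hwI : w ∈ Ioo (0:ℝ) ξ0 := (hP w (hsubca hw)).1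
  have hGd : ∀ x ∈ Ioo c ξ0, HasDerivAt
      (fun y => -(deriv (fun z => f z^m) y) - m*C4*f y)
      (-(m*(m-1)*(f x^(m-2))*(deriv f x)^2 + m*(f x^(m-1))*(deriv (deriv f) x))
        - m*C4*deriv f x) x := by
    intro x hx
    have hxI := (hP x (hsubca hx)).1
    exact ((hFm2 x hxI).neg).sub ((hdf x hxI).const_mul (m*C4))
  have hGd0 : ∀ x ∈ Ioo c ξ0,
      0 ≤ -(m*(m-1)*(f x^(m-2))*(deriv f x)^2 + m*(f x^(m-1))*(deriv (deriv f) x))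
        - m*C4*deriv f x := by
    intro x hx
    obtain ⟨hxI, hP2, hP3, hP4⟩ := hP x (hsubca hx)
    have hF : 0 < f x := hfpos x hxI
    have hA : deriv f x < 0 := S4c x ⟨hx.1.le, hx.2⟩
    have h2m : 0 < f x^(2-m) := Real.rpow_pos_of_pos hF _
    have hrel : f x^(m-1) * f x^(2-m) = f x := by
      rw [← Real.rpow_add hF]; norm_num
    have hrel' : aC * (f x^(m-1) * f x^(2-m)) = aC * f x := by rw [hrel]
    have hE0 := hE x hxI
    have hav : aC * (f x^(m-1)) ≤ x^σ := by
      have h1 : 4*m*(aC * (f x^(m-1))) < 4*m*(x^σ) := by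
        have hsq : 0 ≤ (bC*x)^2 := sq_nonneg _
        linarith [hP2, hD, hsq]
      exact (lt_of_mul_lt_mul_left h1 (by linarith)).le
    have hprod1 : 0 ≤ (-(deriv f x)) * (m*C4 - (bC*x + ((N:ℝ)-1)/x * (f x^(m-1)) * m)) :=
      mul_nonneg (by linarith) (by linarith [hP3])
    have hprod2 : 0 ≤ (x^σ - aC*(f x^(m-1))) * (f x^(2-m)) :=
      mul_nonneg (by linarith [hav]) h2m.le
    linarith [hE0, hprod1, hprod2, hrel']
  have hGmono : MonotoneOn (fun y => -(deriv (fun z => f z^m) y) - m*C4*f y) (Ico w ξ0) := by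
    apply monotoneOn_of_deriv_nonneg (convex_Ico w ξ0)
    · intro y hy
      exact ((hGd y ⟨lt_of_lt_of_le hw.1 hy.1, hy.2⟩).continuousAt).continuousWithinAt
    · intro y hy
      rw [interior_Ico] at hy
      exact ((hGd y ⟨lt_trans hw.1 hy.1, hy.2⟩).differentiableAt).differentiableWithinAt
    · intro y hy
      rw [interior_Ico] at hy
      have hyc : y ∈ Ioo c ξ0 := ⟨lt_trans hw.1 hy.1, hy.2⟩
      rw [(hGd y hyc).deriv]
      exact hGd0 y hyc
  have hGw : 0 < -(deriv (fun z => f z^m) w) - m*C4*f w := by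
    rw [hFm' w hwI]
    have hFw : 0 < f w := hfpos w hwI
    have hFPw : 0 < f w^(m-2) := Real.rpow_pos_of_pos hFw _
    have r1w : f w^(m-1) = f w^(m-2) * f w := by
      rw [show m-1 = (m-2)+1 by ring, Real.rpow_add hFw, Real.rpow_one]
    rw [r1w]
    have h1 : 0 < -((f w^(m-2))*deriv f w) - C4 := by
      have h2 := hwK
      rw [hKdef] at h2
      nlinarith [h2, hm1]
    have h3 := mul_pos (mul_pos hm0 hFw) h1
    nlinarith [h3]
  have hGlim : Tendsto (fun y => -(deriv (fun z => f z^m) y) - m*C4*f y) (𝓝[<] ξ0) (𝓝 0) := by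
    have h1 := (hder0.neg).sub (hfz0.const_mul (m*C4))
    have h2 : -(0:ℝ) - m*C4*0 = 0 := by ring
    rw [← h2]
    exact h1
  have hfinal : -(deriv (fun z => f z^m) w) - m*C4*f w ≤ 0 := by
    refine ge_of_tendsto hGlim ?_
    filter_upwards [Ioo_mem_nhdsLT_of_mem (⟨hw.2, le_refl ξ0⟩ : ξ0 ∈ Ioc w ξ0)] with t ht
    exact hGmono ⟨le_refl w, hw.2⟩ ⟨ht.1.le, ht.2⟩ ht.1.le
  linarith [hGw, hfinal]
end

section
/- Assume m + p < 2. Then the profile equation (SSODE) admits no good profile with interface. -/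
open Real Filter Set Topology

-- auxiliary lemma : derivative of W
lemma auxW (N : ℕ) (m p σ : ℝ) (f : ℝ → ℝ) (ξ : ℝ) (hN : 1 ≤ N) (hξ : 0 < ξ)
    (hode : SSODE N m p σ f ξ)
    (hfd : HasDerivAt f (deriv f ξ) ξ)
    (hgd2 : HasDerivAt (deriv (fun x => f x ^ m)) (deriv (deriv fun x => f x ^ m) ξ) ξ) :
    HasDerivAt (fun x => x^(N-1) * deriv (fun x => f x ^ m) x + betaC m p σ * (x^N * f x))
      (ξ^(N-1) * ((alphaC m p σ + betaC m p σ * N) * f ξ - ξ^σ * f ξ^p)) ξ := by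
  obtain ⟨n, rfl⟩ := Nat.exists_eq_add_of_le hN
  have h1 := ((hasDerivAt_pow (1+n-1) ξ).mul hgd2)
  have h2 := ((hasDerivAt_pow (1+n) ξ).mul hfd)
  have h3 := h1.add (h2.const_mul (betaC m p σ))
  convert h3 using 1
  case e'_4 => rfl
  case e'_5 => rfl
  case e'_8 => rfl
  have hD2 : deriv (deriv fun x => f x ^ m) ξ
      = alphaC m p σ * f ξ - betaC m p σ * ξ * deriv f ξ - ξ^σ * f ξ^p
        - (((1+n : ℕ) : ℝ) - 1) / ξ * deriv (fun x => f x ^ m) ξ := by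
    unfold SSODE at hode; linarith
  rw [hD2]
  have e1 : (1+n) - 1 = n := by omega
  rw [e1]
  have e2 : ((n:ℝ)) * ξ^(n-1) * ξ = (n:ℝ) * ξ^n := by
    cases n with
    | zero => simp
    | succ k => rw [Nat.succ_sub_one, pow_succ]; ring
  have e3 : ξ^n * ξ = ξ^(1+n) := by rw [add_comm, pow_succ]
  have hξne : ξ ≠ 0 := ne_of_gt hξ
  have e4 : (((1+n : ℕ):ℝ) - 1) = (n:ℝ) := by push_cast; ring
  rw [e4]
  field_simp
  rw [← e3]
  linear_combination (-(deriv (fun x => f x ^ m) ξ)) * e2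

lemma auxdiv (a b c d e : ℝ) (hb : b ≠ 0) (hd : d ≠ 0) :
    a * (c / b) * (e / d) = a / (b * d) * (c * e) := by
  field_simp

set_option maxHeartbeats 2000000 in
theorem no_good_profile_mp_lt_two (m p σ : ℝ) (N : ℕ) (hm : 1 < m) (hp0 : 0 < p) (hp1 : p < 1)
    (hσ : 2 * (1 - p) / (m - 1) < σ) (hN : 1 ≤ N)
    (hmp : m + p < 2) :
    ¬ ∃ f : ℝ → ℝ, ∃ ξ0 : ℝ, GoodProfile N m p σ f ξ0 := by
  rintro ⟨f, ξ0, ⟨⟨hξ0, hcont, hfpos, hC2, hode, hfz, hglim⟩, -⟩⟩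
  have hm1 : (0:ℝ) < m - 1 := by linarith
  have hp1' : (0:ℝ) < 1 - p := by linarith
  have hL : 0 < σ * (m - 1) + 2 * (p - 1) := by
    have h := (div_lt_iff₀ hm1).mp hσ
    nlinarith
  have hσ0 : (0:ℝ) < σ := lt_trans (div_pos (by linarith) hm1) hσ
  have hβ : 0 < betaC m p σ := div_pos (by linarith) hL
  have hα : 0 < alphaC m p σ := div_pos (by linarith) hL
  have hNR : (1:ℝ) ≤ (N:ℝ) := by exact_mod_cast hN
  -- differentiability infrastructure
  have hopen : IsOpen (Ioo (0:ℝ) ξ0) := isOpen_Ioo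
  have hg_cd : ContDiffOn ℝ 2 (fun x => f x ^ m) (Ioo 0 ξ0) := by
    intro x hx
    exact (Real.contDiffAt_rpow_const_of_ne
      (ne_of_gt (hfpos x hx))).comp_contDiffWithinAt x (hC2 x hx)
  have hdg_cd : ContDiffOn ℝ 1 (deriv fun x => f x ^ m) (Ioo 0 ξ0) :=
    hg_cd.deriv_of_isOpen hopen (by norm_num)
  have hfd : ∀ x ∈ Ioo 0 ξ0, HasDerivAt f (deriv f x) x := fun x hx =>
    (((hC2 x hx).differentiableWithinAt (by norm_num)).differentiableAt
      (hopen.mem_nhds hx)).hasDerivAt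
  have hgd2 : ∀ x ∈ Ioo 0 ξ0,
      HasDerivAt (deriv fun x => f x ^ m) (deriv (deriv fun x => f x ^ m) x) x := fun x hx =>
    (((hdg_cd x hx).differentiableWithinAt (by norm_num)).differentiableAt
      (hopen.mem_nhds hx)).hasDerivAt
  have hderivg : ∀ x ∈ Ioo 0 ξ0,
      deriv (fun y => f y ^ m) x = deriv f x * m * f x ^ (m-1) := fun x hx =>
    ((hfd x hx).rpow_const (Or.inl (ne_of_gt (hfpos x hx)))).deriv
  -- W and its derivative
  set W : ℝ → ℝ := fun x => x^(N-1) * deriv (fun x => f x ^ m) x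
      + betaC m p σ * (x^N * f x) with hWdef
  have hW' : ∀ ξ ∈ Ioo 0 ξ0, HasDerivAt W
      (ξ^(N-1) * ((alphaC m p σ + betaC m p σ * N) * f ξ - ξ^σ * f ξ^p)) ξ := fun ξ hξ =>
    auxW N m p σ f ξ hN hξ.1 (hode ξ hξ) (hfd ξ hξ) (hgd2 ξ hξ)
  -- limits at ξ0
  have hflim : Tendsto f (𝓝[<] ξ0) (𝓝 0) := by
    have h1 : Tendsto f (𝓝[Icc 0 ξ0] ξ0) (𝓝 0) := by
      have h := hcont ξ0 ⟨le_of_lt hξ0, le_rfl⟩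
      rw [ContinuousWithinAt, hfz] at h; exact h
    refine h1.mono_left ?_
    rw [← nhdsWithin_Ioo_eq_nhdsLT hξ0]
    exact nhdsWithin_mono _ Ioo_subset_Icc_self
  have hWlim : Tendsto W (𝓝[<] ξ0) (𝓝 0) := by
    have h1 : Tendsto (fun x : ℝ => x ^ (N-1)) (𝓝[<] ξ0) (𝓝 (ξ0^(N-1))) :=
      ((continuous_pow (N-1)).tendsto ξ0).mono_left nhdsWithin_le_nhds
    have h2 : Tendsto (fun x : ℝ => x ^ N) (𝓝[<] ξ0) (𝓝 (ξ0^N)) :=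
      ((continuous_pow N).tendsto ξ0).mono_left nhdsWithin_le_nhds
    have h3 := (h1.mul hglim).add ((h2.mul hflim).const_mul (betaC m p σ))
    simpa using h3
  clear_value W
  -- constants
  set K' : ℝ := betaC m p σ * (m-1) * ξ0 / m with hK'def
  have hK' : 0 < K' := by positivity
  clear_value K'
  set c₆ : ℝ := (ξ0/2)^(N-1) * ((ξ0/2)^σ / 2) with hc₆def
  have hc₆ : 0 < c₆ := by positivity
  clear_value c₆
  set c₈ : ℝ := c₆ / ((2:ℝ)^(p/(m-1)) * (2*K')) with hc₈def
  have hc₈ : 0 < c₈ := by positivity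
  clear_value c₈
  -- eventual conditions near ξ0
  have hEv : ∀ᶠ ξ in 𝓝[<] ξ0, ξ ∈ Ioo 0 ξ0 ∧ ξ0/2 < ξ ∧
      (alphaC m p σ + betaC m p σ * N) * f ξ ^ (1-p) < (ξ0/2)^σ / 2 ∧
      betaC m p σ * ξ0^N * f ξ ^ (2-m-p) < c₈ := by
    have hmem : Ioo (ξ0/2) ξ0 ∈ 𝓝[<] ξ0 :=
      Ioo_mem_nhdsLT_of_mem ⟨half_lt_self hξ0, le_rfl⟩
    have hE0 : ∀ᶠ ξ in 𝓝[<] ξ0, ξ ∈ Ioo 0 ξ0 ∧ ξ0/2 < ξ := by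
      filter_upwards [hmem] with ξ hξ
      exact ⟨⟨lt_trans (half_pos hξ0) hξ.1, hξ.2⟩, hξ.1⟩
    have hE1 : ∀ᶠ ξ in 𝓝[<] ξ0,
        (alphaC m p σ + betaC m p σ * N) * f ξ ^ (1-p) < (ξ0/2)^σ / 2 := by
      have ht : Tendsto (fun ξ => (alphaC m p σ + betaC m p σ * N) * f ξ ^ (1-p))
          (𝓝[<] ξ0) (𝓝 0) := by
        have hc : Tendsto (fun ξ => f ξ ^ (1-p)) (𝓝[<] ξ0) (𝓝 ((0:ℝ) ^ (1-p))) :=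
          ((Real.continuousAt_rpow_const 0 (1-p) (Or.inr hp1'.le)).tendsto).comp hflim
        rw [Real.zero_rpow (ne_of_gt hp1')] at hc
        simpa using hc.const_mul (alphaC m p σ + betaC m p σ * N)
      exact ht.eventually_lt_const (by positivity)
    have hE2 : ∀ᶠ ξ in 𝓝[<] ξ0, betaC m p σ * ξ0^N * f ξ ^ (2-m-p) < c₈ := by
      have ht : Tendsto (fun ξ => betaC m p σ * ξ0^N * f ξ ^ (2-m-p))
          (𝓝[<] ξ0) (𝓝 0) := by
        have hc : Tendsto (fun ξ => f ξ ^ (2-m-p)) (𝓝[<] ξ0) (𝓝 ((0:ℝ) ^ (2-m-p))) :=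
          ((Real.continuousAt_rpow_const 0 (2-m-p) (Or.inr (by linarith))).tendsto).comp hflim
        rw [Real.zero_rpow (by linarith : (2:ℝ)-m-p ≠ 0)] at hc
        simpa using hc.const_mul (betaC m p σ * ξ0^N)
      exact ht.eventually_lt_const hc₈
    filter_upwards [hE0, hE1, hE2] with ξ h0 h1 h2
    exact ⟨h0.1, h0.2, h1, h2⟩
  rw [eventually_iff, mem_nhdsLT_iff_exists_Ioo_subset] at hEv
  obtain ⟨A₀, hA₀, hA₀sub⟩ := hEv
  set A : ℝ := max A₀ (ξ0/2) with hAdef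
  have hAlt : A < ξ0 := max_lt hA₀ (half_lt_self hξ0)
  have hApos : 0 < A := lt_of_lt_of_le (half_pos hξ0) (le_max_right _ _)
  have hP : ∀ ξ ∈ Ioo A ξ0, ξ ∈ Ioo 0 ξ0 ∧ ξ0/2 < ξ ∧
      (alphaC m p σ + betaC m p σ * N) * f ξ ^ (1-p) < (ξ0/2)^σ / 2 ∧
      betaC m p σ * ξ0^N * f ξ ^ (2-m-p) < c₈ := by
    intro ξ hξ
    exact hA₀sub ⟨lt_of_le_of_lt (le_max_left _ _) hξ.1, hξ.2⟩
  have hsub : Ioo A ξ0 ⊆ Ioo 0 ξ0 := fun x hx => (hP x hx).1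
  have hsub2 : Ioc A ξ0 ⊆ Icc 0 ξ0 := fun x hx =>
    ⟨le_of_lt (lt_trans hApos hx.1), hx.2⟩
  -- key pointwise inequality for W'
  have hkey : ∀ ξ ∈ Ioo A ξ0,
      (alphaC m p σ + betaC m p σ * N) * f ξ - ξ^σ * f ξ^p
        ≤ -((ξ0/2)^σ / 2 * f ξ^p) := by
    intro ξ hξ
    obtain ⟨hξ01, hhalf, h1, -⟩ := hP ξ hξ
    have hfx : 0 < f ξ := hfpos ξ hξ01
    have hfp : 0 < f ξ ^ p := Real.rpow_pos_of_pos hfx p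
    have hsplit : f ξ ^ (1-p) * f ξ ^ p = f ξ := by
      rw [← Real.rpow_add hfx]; norm_num
    have h2 : (alphaC m p σ + betaC m p σ * N) * f ξ < (ξ0/2)^σ / 2 * f ξ ^ p := by
      calc (alphaC m p σ + betaC m p σ * N) * f ξ
          = ((alphaC m p σ + betaC m p σ * N) * f ξ ^ (1-p)) * f ξ ^ p := by
            rw [mul_assoc, hsplit]
        _ < (ξ0/2)^σ / 2 * f ξ ^ p := by exact mul_lt_mul_of_pos_right h1 hfp
    have h3 : (ξ0/2)^σ ≤ ξ^σ :=
      Real.rpow_le_rpow (by positivity) (le_of_lt hhalf) hσ0.le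
    have h4 : (ξ0/2)^σ * f ξ ^ p ≤ ξ^σ * f ξ ^ p :=
      mul_le_mul_of_nonneg_right h3 hfp.le
    linarith
  -- W is strictly decreasing on Ioo A ξ0
  have hanti : StrictAntiOn W (Ioo A ξ0) := by
    apply strictAntiOn_of_deriv_neg (convex_Ioo A ξ0)
    · exact fun x hx => ((hW' x (hsub hx)).continuousAt).continuousWithinAt
    · intro x hx
      rw [interior_Ioo] at hx
      rw [(hW' x (hsub hx)).deriv]
      have h1 := hkey x hx
      have hfx : 0 < f x := hfpos x (hsub hx)
      have hfp : 0 < f x ^ p := Real.rpow_pos_of_pos hfx p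
      have hxpos : 0 < x := (hsub hx).1
      have hx1 : 0 < x^(N-1) := pow_pos hxpos _
      have h2 : (0:ℝ) < (ξ0/2)^σ / 2 * f x ^ p := by positivity
      have h3 : (alphaC m p σ + betaC m p σ * N) * f x - x^σ * f x^p < 0 := by linarith
      exact mul_neg_of_pos_of_neg hx1 h3
  -- W is positive on Ioo A ξ0
  have hWpos : ∀ ξ ∈ Ioo A ξ0, 0 < W ξ := by
    intro ξ hξ
    have hμmem : (ξ+ξ0)/2 ∈ Ioo A ξ0 := ⟨by linarith [hξ.1, hξ.2], by linarith [hξ.2]⟩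
    have hμlt : ξ < (ξ+ξ0)/2 := by linarith [hξ.2]
    have h1 : W ((ξ+ξ0)/2) < W ξ := hanti hξ hμmem hμlt
    have h2 : 0 ≤ W ((ξ+ξ0)/2) := by
      refine le_of_tendsto hWlim ?_
      have hmem2 : Ioo ((ξ+ξ0)/2) ξ0 ∈ 𝓝[<] ξ0 :=
        Ioo_mem_nhdsLT_of_mem ⟨by linarith [hξ.2], le_rfl⟩
      filter_upwards [hmem2] with t ht
      have htmem : t ∈ Ioo A ξ0 := ⟨lt_trans hμmem.1 ht.1, ht.2⟩
      exact le_of_lt (hanti hμmem htmem ht.1)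
    exact lt_of_le_of_lt h2 h1
  -- the function f^(m-1) + K'·x is strictly monotone on Ioc A ξ0
  have hφd : ∀ x ∈ Ioo A ξ0, HasDerivAt (fun y => f y ^ (m-1) + K' * y)
      (deriv f x * (m-1) * f x ^ (m-1-1) + K') x := by
    intro x hx
    have h1 : HasDerivAt (fun y => f y ^ (m-1)) (deriv f x * (m-1) * f x ^ (m-1-1)) x :=
      (hfd x (hsub hx)).rpow_const (Or.inl (ne_of_gt (hfpos x (hsub hx))))
    have h2 : HasDerivAt (fun y : ℝ => K' * y) (K' * 1) x := (hasDerivAt_id x).const_mul K'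
    have h3 : HasDerivAt (fun y => f y ^ (m-1) + K' * y)
        (deriv f x * (m-1) * f x ^ (m-1-1) + K' * 1) x := h1.add h2
    rwa [mul_one] at h3
  have hφpos : ∀ x ∈ Ioo A ξ0, 0 < deriv f x * (m-1) * f x ^ (m-1-1) + K' := by
    intro x hx
    have hx0 := hsub hx
    have hfx : 0 < f x := hfpos x hx0
    have hxpos : 0 < x := hx0.1
    have hx1 : 0 < x^(N-1) := pow_pos hxpos _
    have hxN : x^N = x^(N-1) * x := by
      conv_lhs => rw [show N = (N-1)+1 by omega]
      rw [pow_succ]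
    have hWx : 0 < x^(N-1) * (deriv f x * m * f x ^ (m-1))
        + betaC m p σ * (x^(N-1) * x * f x) := by
      have h0 := hWpos x hx
      rw [hWdef] at h0
      simp only at h0
      rw [hderivg x hx0, hxN] at h0
      linarith [h0]
    have hdg : -(betaC m p σ * x * f x) < deriv f x * m * f x ^ (m-1) := by
      by_contra hcon
      push_neg at hcon
      have h11 : x^(N-1) * (deriv f x * m * f x ^ (m-1))
          ≤ x^(N-1) * (-(betaC m p σ * x * f x)) :=
        mul_le_mul_of_nonneg_left hcon hx1.le
      nlinarith [hWx, h11]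
    have h5 : f x ^ (m-1-1) * f x = f x ^ (m-1) := by
      rw [← Real.rpow_add_one (ne_of_gt hfx)]; ring_nf
    have h7 : 0 < m * f x := by positivity
    have hfm2 : 0 < f x ^ (m-1-1) := Real.rpow_pos_of_pos hfx _
    have hfin : 0 < (deriv f x * (m-1) * f x ^ (m-1-1) + K') * (m * f x) := by
      have e8 : (deriv f x * (m-1) * f x ^ (m-1-1) + K') * (m * f x)
          = (m-1) * (deriv f x * m * (f x ^ (m-1-1) * f x)) + K' * m * f x := by ring
      rw [e8, h5]
      have e9 : K' * m = betaC m p σ * (m-1) * ξ0 := by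
        rw [hK'def]; field_simp
      have e10 : (m-1) * (-(betaC m p σ * x * f x)) + K' * m * f x
          = betaC m p σ * (m-1) * f x * (ξ0 - x) := by rw [e9]; ring
      have h11 : (m-1) * (-(betaC m p σ * x * f x))
          < (m-1) * (deriv f x * m * f x ^ (m-1)) := mul_lt_mul_of_pos_left hdg hm1
      have h12 : 0 < betaC m p σ * (m-1) * f x * (ξ0 - x) := by
        have : 0 < ξ0 - x := sub_pos.mpr hx0.2
        positivity
      linarith [h11, h12, e10]
    by_contra hcon
    push_neg at hcon
    have h13 : 0 ≤ (m * f x) * (-(deriv f x * (m-1) * f x ^ (m-1-1) + K')) :=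
      mul_nonneg h7.le (neg_nonneg.mpr hcon)
    linarith [hfin, h13]
  have hφmono : StrictMonoOn (fun y => f y ^ (m-1) + K' * y) (Ioc A ξ0) := by
    apply strictMonoOn_of_deriv_pos (convex_Ioc A ξ0)
    · apply ContinuousOn.add
      · exact (hcont.mono hsub2).rpow_const (fun x _ => Or.inr hm1.le)
      · exact (continuous_const.mul continuous_id).continuousOn
    · intro x hx
      rw [interior_Ioc] at hx
      rw [(hφd x hx).deriv]
      exact hφpos x hx
  have hφz : f ξ0 ^ (m-1) + K' * ξ0 = K' * ξ0 := by
    rw [hfz, Real.zero_rpow (ne_of_gt hm1)]; ring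
  have hup : ∀ ξ ∈ Ioo A ξ0, f ξ ^ (m-1) < K' * (ξ0 - ξ) := by
    intro ξ hξ
    have h := hφmono ⟨hξ.1, hξ.2.le⟩ ⟨hAlt, le_rfl⟩ hξ.2
    simp only at h
    rw [hφz] at h
    linarith
  have hfwd : ∀ ξ ∈ Ioc A ξ0, ∀ s ∈ Ioc A ξ0, ξ ≤ s →
      f ξ ^ (m-1) - K' * (s - ξ) ≤ f s ^ (m-1) := by
    intro ξ hξ s hs hle
    have h := hφmono.monotoneOn hξ hs hle
    linarith
  -- main claim: deriv (f^m) > 0 on Ioo A ξ0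
  have hg'pos : ∀ ξ ∈ Ioo A ξ0, 0 < deriv (fun x => f x ^ m) ξ := by
    intro ξ hξ
    obtain ⟨hξ01, hhalf, h1ev, h2ev⟩ := hP ξ hξ
    have hfx : 0 < f ξ := hfpos ξ hξ01
    set η : ℝ := f ξ ^ (m-1) with hηdef
    have hη : 0 < η := by rw [hηdef]; exact Real.rpow_pos_of_pos hfx _
    clear_value η
    set h : ℝ := η / (2 * K') with hhdef
    have hh : 0 < h := by positivity
    clear_value h
    have hh2 : 2 * K' * h = η := by rw [hhdef]; field_simp
    have hηlt : η < K' * (ξ0 - ξ) := by rw [hηdef]; exact hup ξ hξ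
    have hlt : ξ + h < ξ0 := by
      have h1 : K' * (2*h) < K' * (ξ0 - ξ) := by linarith [hh2, hηlt]
      have h2 := (mul_lt_mul_iff_right₀ hK').mp h1
      linarith
    have hIccsub : Icc ξ (ξ+h) ⊆ Ioo A ξ0 := fun s hs =>
      ⟨lt_of_lt_of_le hξ.1 hs.1, lt_of_le_of_lt hs.2 hlt⟩
    -- lower bound for f on the small interval
    have hlow : ∀ s ∈ Icc ξ (ξ+h), η/2 ≤ f s ^ (m-1) := by
      intro s hs
      have hsm := hIccsub hs
      have h1 := hfwd ξ ⟨hξ.1, hξ.2.le⟩ s ⟨hsm.1, hsm.2.le⟩ hs.1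
      have h2 : K' * (s - ξ) ≤ K' * h := by
        apply mul_le_mul_of_nonneg_left _ hK'.le
        linarith [hs.2]
      linarith [h1, h2, hh2, hηdef]
    have hqlow : ∀ s ∈ Icc ξ (ξ+h), (η/2)^(p/(m-1)) ≤ f s ^ p := by
      intro s hs
      have hsm := hIccsub hs
      have hfs : 0 < f s := hfpos s (hsub hsm)
      have e1 : (f s ^ (m-1)) ^ (p/(m-1)) = f s ^ p := by
        rw [← Real.rpow_mul hfs.le]
        congr 1
        field_simp
      rw [← e1]
      exact Real.rpow_le_rpow (by positivity) (hlow s hs) (by positivity)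
    set q : ℝ := (η/2)^(p/(m-1)) with hqdef
    have hq : 0 < q := by rw [hqdef]; positivity
    clear_value q
    set c : ℝ := c₆ * q with hcdef
    have hc : 0 < c := by positivity
    clear_value c
    -- antitone auxiliary function on the small interval
    have hanti2 : AntitoneOn (fun s => W s + c * s) (Icc ξ (ξ+h)) := by
      apply antitoneOn_of_deriv_nonpos (convex_Icc ξ (ξ+h))
      · intro s hs
        have := ((hW' s (hsub (hIccsub hs))).add
          ((hasDerivAt_id' s).const_mul c)).continuousAt
        exact this.continuousWithinAt
      · intro s hs
        rw [interior_Icc] at hs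
        have hsm := hIccsub ⟨hs.1.le, hs.2.le⟩
        exact (((hW' s (hsub hsm)).add
          ((hasDerivAt_id' s).const_mul c)).differentiableAt).differentiableWithinAt
      · intro s hs
        rw [interior_Icc] at hs
        have hsmem : s ∈ Icc ξ (ξ+h) := ⟨hs.1.le, hs.2.le⟩
        have hsm := hIccsub hsmem
        have hDs : HasDerivAt (fun s => W s + c * s) _ s :=
          (hW' s (hsub hsm)).add ((hasDerivAt_id' s).const_mul c)
        rw [hDs.deriv]
        have hk := hkey s hsm
        have hspos : 0 < s := (hsub hsm).1
        have hfsp : 0 < f s ^ p := Real.rpow_pos_of_pos (hfpos s (hsub hsm)) p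
        have t1 : s^(N-1) * ((alphaC m p σ + betaC m p σ * N) * f s - s^σ * f s^p)
            ≤ s^(N-1) * (-((ξ0/2)^σ / 2 * f s ^ p)) :=
          mul_le_mul_of_nonneg_left hk (pow_nonneg hspos.le _)
        have t2 : (ξ0/2)^(N-1) * ((ξ0/2)^σ / 2 * q)
            ≤ s^(N-1) * ((ξ0/2)^σ / 2 * f s ^ p) := by
          apply mul_le_mul
          · exact pow_le_pow_left₀ (by positivity) (le_of_lt (hP s hsm).2.1) _
          · exact mul_le_mul_of_nonneg_left (hqlow s hsmem) (by positivity)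
          · positivity
          · positivity
        have e2 : c₆ * q = (ξ0/2)^(N-1) * ((ξ0/2)^σ / 2 * q) := by
          rw [hc₆def]; ring
        simp only [mul_one]
        rw [hcdef, e2]
        linarith
    -- quantitative drop
    have hend : ξ + h ∈ Ioo A ξ0 := hIccsub ⟨le_of_lt (by linarith), le_rfl⟩
    have hdrop : c * h < W ξ := by
      have hle : ξ ≤ ξ + h := by linarith
      have h1 : W (ξ+h) + c*(ξ+h) ≤ W ξ + c*ξ :=
        hanti2 ⟨le_rfl, hle⟩ ⟨hle, le_rfl⟩ hle
      have h2 := hWpos (ξ+h) hend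
      linarith [h1, h2]
    -- the competitor term is smaller
    have hcomp : betaC m p σ * (ξ^N * f ξ) < c * h := by
      have hT : (0:ℝ) < (2:ℝ)^(p/(m-1)) := Real.rpow_pos_of_pos two_pos _
      obtain ⟨T, hTdef⟩ : ∃ T, T = (2:ℝ)^(p/(m-1)) := ⟨_, rfl⟩
      rw [← hTdef] at hT hc₈def
      have e3 : q = f ξ ^ p / T := by
        have hexp : (m-1) * (p/(m-1)) = p := by field_simp
        rw [hqdef, Real.div_rpow hη.le (by norm_num), hηdef,
          ← Real.rpow_mul hfx.le, hexp, ← hTdef]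
      have e4 : c * h = c₈ * (f ξ ^ p * η) := by
        rw [hcdef, e3, hhdef, hc₈def]
        exact auxdiv c₆ T (f ξ ^ p) (2*K') η (ne_of_gt hT) (mul_pos two_pos hK').ne'
      have e5 : f ξ ^ p * η = f ξ ^ (m+p-1) := by
        rw [hηdef, ← Real.rpow_add hfx]
        congr 1; ring
      have e6 : f ξ ^ (2-m-p) * f ξ ^ (m+p-1) = f ξ := by
        rw [← Real.rpow_add hfx, show (2-m-p+(m+p-1) : ℝ) = 1 by ring, Real.rpow_one]
      have hfmp : 0 < f ξ ^ (m+p-1) := Real.rpow_pos_of_pos hfx _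
      have h7 : betaC m p σ * ξ0^N * f ξ ^ (2-m-p) * f ξ ^ (m+p-1)
          < c₈ * f ξ ^ (m+p-1) := mul_lt_mul_of_pos_right h2ev hfmp
      have h8 : betaC m p σ * (ξ^N * f ξ) ≤ betaC m p σ * (ξ0^N * f ξ) := by
        apply mul_le_mul_of_nonneg_left _ hβ.le
        apply mul_le_mul_of_nonneg_right _ hfx.le
        exact pow_le_pow_left₀ hξ01.1.le hξ.2.le _
      calc betaC m p σ * (ξ^N * f ξ) ≤ betaC m p σ * (ξ0^N * f ξ) := h8
        _ = betaC m p σ * ξ0^N * f ξ ^ (2-m-p) * f ξ ^ (m+p-1) := by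
            rw [mul_assoc (betaC m p σ * ξ0^N), e6]; ring
        _ < c₈ * f ξ ^ (m+p-1) := h7
        _ = c₈ * (f ξ ^ p * η) := by rw [e5]
        _ = c * h := e4.symm
    -- conclude
    have hfinal : 0 < ξ^(N-1) * deriv (fun x => f x ^ m) ξ := by
      have hWval : W ξ = ξ^(N-1) * deriv (fun x => f x ^ m) ξ
          + betaC m p σ * (ξ^N * f ξ) := by rw [hWdef]
      linarith [hdrop, hcomp, hWval]
    have hx1 : 0 < ξ^(N-1) := pow_pos hξ01.1 _
    by_contra hcon
    push_neg at hcon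
    have h14 : 0 ≤ ξ^(N-1) * (-(deriv (fun x => f x ^ m) ξ)) :=
      mul_nonneg hx1.le (neg_nonneg.mpr hcon)
    nlinarith [hfinal, h14]
  -- final contradiction
  have hgmono : StrictMonoOn (fun x => f x ^ m) (Ioc A ξ0) := by
    apply strictMonoOn_of_deriv_pos (convex_Ioc A ξ0)
    · exact (hcont.mono hsub2).rpow_const (fun x _ => Or.inr (by linarith))
    · intro x hx
      rw [interior_Ioc] at hx
      exact hg'pos x hx
  have htmem : (A+ξ0)/2 ∈ Ioc A ξ0 := ⟨by linarith, by linarith⟩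
  have h1 := hgmono htmem ⟨hAlt, le_rfl⟩ (by linarith)
  simp only at h1
  rw [hfz, Real.zero_rpow (by linarith : m ≠ 0)] at h1
  have h2 : 0 < f ((A+ξ0)/2) ^ m :=
    Real.rpow_pos_of_pos (hfpos _ (hsub ⟨by linarith, by linarith⟩)) m
  linarith
end

section
/- Let f be positive and twice continuously differentiable on an open interval I ⊆ (0,∞) and suppose f satisfies the profile equation (SSODE) on I. Define X(ξ) = (m/α) ξ^{−2} f(ξ)^{m−1}, Y(ξ) = (m/α) ξ^{−1} f(ξ)^{m−2} f'(ξ), Z(ξ) = (m/α²) ξ^{σ−2} f(ξ)^{m+p−2}. Then for every ξ ∈ I: (m f(ξ)^{m−1}/(α ξ)) X'(ξ) = X(ξ)((m−1)Y(ξ) − 2X(ξ)); (m f(ξ)^{m−1}/(α ξ)) Y'(ξ) = −Y(ξ)² − (β/α)Y(ξ) + X(ξ) − N X(ξ)Y(ξ) − Z(ξ); and (m f(ξ)^{m−1}/(α ξ)) Z'(ξ) = Z(ξ)((m+p−2)Y(ξ) + (σ−2)X(ξ)). In other words, in the rescaled time η with dη/dξ = (α/m) ξ f(ξ)^{1−m},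 the triple (X,Y,Z) solves the autonomous system (PSsyst1). -/
open Real Filter Set Topology

/-!
Each phase variable is a product of powers of `ξ` and of `f`, `f'`, so its logarithmic
derivative is a linear combination of `f'/f` and `1/ξ`. Multiplied by the time scale
`m f^(m-1)/(α ξ)`, these two become exactly `Y` and `X`, which gives the equations for `X` and
`Z` directly; for `Y` the remaining term contains `f''`, which is eliminated with the profile
equation.
-/

noncomputable section

/-- `dξ/dη` for the new time `η` of the paper, `dη/dξ = (α/m) ξ f^(1-m)`. -/
def phaseTimeScale (m α : ℝ) (f : ℝ → ℝ) (ξ : ℝ) : ℝ := m * f ξ ^ (m - 1) / (α * ξ)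

def phaseX (m α : ℝ) (f : ℝ → ℝ) (ξ : ℝ) : ℝ := m / α * (f ξ ^ (m - 1) / ξ ^ 2)

def phaseY (m α : ℝ) (f : ℝ → ℝ) (ξ : ℝ) : ℝ := m / α * (f ξ ^ (m - 2) * deriv f ξ / ξ)

def phaseZ (m p σ α : ℝ) (f : ℝ → ℝ) (ξ : ℝ) : ℝ :=
  m / α ^ 2 * (ξ ^ (σ - 2) * f ξ ^ (m + p - 2))

end

theorem alphaC_pos {m p σ : ℝ} (hm : 1 < m) (hp : p < 1) (hσ : 2 * (1 - p) / (m - 1) < σ) :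
    0 < alphaC m p σ := by
  have hm1 : 0 < m - 1 := by linarith
  have hσ0 : 0 < σ := (div_pos (by linarith) hm1).trans hσ
  have hL : 2 * (1 - p) < σ * (m - 1) := (div_lt_iff₀ hm1).mp hσ
  exact div_pos (by linarith) (by linarith)

theorem HasDerivAt.rpow_const_logDeriv {f : ℝ → ℝ} {f' x : ℝ} (r : ℝ) (hf : HasDerivAt f f' x)
    (hx : f x ≠ 0) : HasDerivAt (fun y => f y ^ r) (f x ^ r * (r * (f' / f x))) x :=
  (hf.rpow_const (Or.inl hx)).congr_deriv (by rw [Real.rpow_sub_one hx]; ring)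

theorem deriv_deriv_rpow_const {f : ℝ → ℝ} {x : ℝ} (r : ℝ)
    (hf : ∀ᶠ y in 𝓝 x, DifferentiableAt ℝ f y) (hf' : DifferentiableAt ℝ (deriv f) x)
    (hf0 : ∀ᶠ y in 𝓝 x, f y ≠ 0) :
    deriv (deriv fun y => f y ^ r) x
      = r * (f x ^ (r - 1) * deriv (deriv f) x + (r - 1) * f x ^ (r - 2) * deriv f x ^ 2) := by
  have h1 : deriv (fun y => f y ^ r) =ᶠ[𝓝 x] fun y => deriv f y * r * f y ^ (r - 1) := by
    filter_upwards [hf, hf0] with y hy hy0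
    exact (hy.hasDerivAt.rpow_const (Or.inl hy0)).deriv
  rw [h1.deriv_eq, ((hf'.hasDerivAt.mul_const r).fun_mul
    (hf.self_of_nhds.hasDerivAt.rpow_const (Or.inl hf0.self_of_nhds))).deriv,
    show r - 1 - 1 = r - 2 by ring]
  ring

section

variable {m α : ℝ} {f : ℝ → ℝ} {ξ : ℝ}

theorem phaseTimeScale_mul_logDeriv (hF : f ξ ≠ 0) :
    phaseTimeScale m α f ξ * (deriv f ξ / f ξ) = phaseY m α f ξ := by
  rw [phaseTimeScale, phaseY, show m - 1 = m - 2 + 1 by ring, Real.rpow_add_one hF]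
  field_simp

theorem phaseTimeScale_div_self : phaseTimeScale m α f ξ / ξ = phaseX m α f ξ := by
  rw [phaseTimeScale, phaseX]
  ring

theorem hasDerivAt_phaseX {f' : ℝ} (hf : HasDerivAt f f' ξ) (hF : f ξ ≠ 0) (hξ : ξ ≠ 0) :
    HasDerivAt (phaseX m α f) (phaseX m α f ξ * ((m - 1) * (f' / f ξ) - 2 / ξ)) ξ := by
  have := ((hf.rpow_const_logDeriv (m - 1) hF).fun_div (hasDerivAt_pow 2 ξ)
    (pow_ne_zero 2 hξ)).const_mul (m / α)
  refine this.congr_deriv ?_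
  rw [phaseX]
  field_simp
  ring

theorem hasDerivAt_phaseY {f'' : ℝ} (hf : HasDerivAt f (deriv f ξ) ξ)
    (hf' : HasDerivAt (deriv f) f'' ξ) (hF : f ξ ≠ 0) (hξ : ξ ≠ 0) :
    HasDerivAt (phaseY m α f)
      (phaseY m α f ξ * ((m - 2) * (deriv f ξ / f ξ) - 1 / ξ)
        + m / α * (f ξ ^ (m - 2) * f'' / ξ)) ξ := by
  have := (((hf.rpow_const_logDeriv (m - 2) hF).fun_mul hf').fun_div
    (hasDerivAt_id' ξ) hξ).const_mul (m / α)
  refine this.congr_deriv ?_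
  rw [phaseY]
  field_simp
  ring

theorem hasDerivAt_phaseZ {p σ f' : ℝ} (hf : HasDerivAt f f' ξ) (hF : f ξ ≠ 0) (hξ : ξ ≠ 0) :
    HasDerivAt (phaseZ m p σ α f)
      (phaseZ m p σ α f ξ * ((m + p - 2) * (f' / f ξ) + (σ - 2) / ξ)) ξ := by
  have := (((hasDerivAt_id' ξ).rpow_const_logDeriv (σ - 2) hξ).fun_mul
    (hf.rpow_const_logDeriv (m + p - 2) hF)).const_mul (m / α ^ 2)
  refine this.congr_deriv ?_
  rw [phaseZ]
  field_simp
  ring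

theorem phaseTimeScale_mul_deriv_phaseX (hf : DifferentiableAt ℝ f ξ) (hF : f ξ ≠ 0)
    (hξ : ξ ≠ 0) :
    phaseTimeScale m α f ξ * deriv (phaseX m α f) ξ
      = phaseX m α f ξ * ((m - 1) * phaseY m α f ξ - 2 * phaseX m α f ξ) := by
  rw [(hasDerivAt_phaseX hf.hasDerivAt hF hξ).deriv, ← phaseTimeScale_mul_logDeriv hF,
    ← phaseTimeScale_div_self]
  ring

theorem phaseTimeScale_mul_deriv_phaseZ {p σ : ℝ} (hf : DifferentiableAt ℝ f ξ) (hF : f ξ ≠ 0)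
    (hξ : ξ ≠ 0) :
    phaseTimeScale m α f ξ * deriv (phaseZ m p σ α f) ξ
      = phaseZ m p σ α f ξ * ((m + p - 2) * phaseY m α f ξ + (σ - 2) * phaseX m α f ξ) := by
  rw [(hasDerivAt_phaseZ hf.hasDerivAt hF hξ).deriv, ← phaseTimeScale_mul_logDeriv hF,
    ← phaseTimeScale_div_self]
  ring

theorem phaseTimeScale_mul_deriv_phaseY {N : ℕ} {p σ β : ℝ}
    (hf : ∀ᶠ x in 𝓝 ξ, DifferentiableAt ℝ f x) (hf' : DifferentiableAt ℝ (deriv f) ξ)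
    (hpos : ∀ᶠ x in 𝓝 ξ, 0 < f x) (hξ : 0 < ξ) (hα : α ≠ 0)
    (hODE : deriv (deriv fun x => f x ^ m) ξ + ((N : ℝ) - 1) / ξ * deriv (fun x => f x ^ m) ξ
      - α * f ξ + β * ξ * deriv f ξ + ξ ^ σ * f ξ ^ p = 0) :
    phaseTimeScale m α f ξ * deriv (phaseY m α f) ξ
      = -phaseY m α f ξ ^ 2 - β / α * phaseY m α f ξ + phaseX m α f ξ
        - N * phaseX m α f ξ * phaseY m α f ξ - phaseZ m p σ α f ξ := by
  have hF : 0 < f ξ := hpos.self_of_nhds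
  have hfξ : HasDerivAt f (deriv f ξ) ξ := hf.self_of_nhds.hasDerivAt
  rw [deriv_deriv_rpow_const m hf hf' (hpos.mono fun _ => ne_of_gt),
    (hfξ.rpow_const (Or.inl hF.ne')).deriv] at hODE
  have hf'' : phaseTimeScale m α f ξ * (m / α * (f ξ ^ (m - 2) * deriv (deriv f) ξ / ξ))
      = -(m - 1) * phaseY m α f ξ ^ 2 - (N - 1) * phaseX m α f ξ * phaseY m α f ξ
        + phaseX m α f ξ - β / α * phaseY m α f ξ - phaseZ m p σ α f ξ := by
    have hF1 : f ξ ^ (m - 1) = f ξ ^ (m - 2) * f ξ := by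
      rw [← Real.rpow_add_one hF.ne']; ring_nf
    have hFp : f ξ ^ (m + p - 2) = f ξ ^ (m - 2) * f ξ ^ p := by
      rw [← Real.rpow_add hF]; ring_nf
    have hξσ : ξ ^ σ = ξ ^ (σ - 2) * ξ ^ 2 := by
      rw [← Real.rpow_natCast, ← Real.rpow_add hξ]; norm_num
    rw [hF1, hξσ] at hODE
    simp only [phaseTimeScale, phaseX, phaseY, phaseZ, hF1, hFp]
    field_simp at hODE ⊢
    linear_combination m * hODE
  rw [(hasDerivAt_phaseY hfξ hf'.hasDerivAt hF.ne' hξ.ne').deriv, mul_add, hf'']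
  linear_combination (m - 2) * phaseY m α f ξ * phaseTimeScale_mul_logDeriv (α := α) hF.ne'
    - phaseY m α f ξ * phaseTimeScale_div_self (m := m) (α := α) (f := f) (ξ := ξ)

end

theorem phase_space_variables_solve_system_general (m p σ : ℝ) (N : ℕ) (hm : 1 < m) (hp1 : p < 1)
    (hσ : 2 * (1 - p) / (m - 1) < σ)
    (a b : ℝ) (ha : 0 ≤ a)
    (f : ℝ → ℝ) (hfpos : ∀ ξ ∈ Ioo a b, 0 < f ξ)
    (hf : ContDiffOn ℝ 2 f (Ioo a b))
    (hode : ∀ ξ ∈ Ioo a b, SSODE N m p σ f ξ)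
    (X Y Z : ℝ → ℝ)
    (hX : ∀ ξ : ℝ, X ξ = m / alphaC m p σ * (f ξ ^ (m - 1) / ξ ^ 2))
    (hY : ∀ ξ : ℝ, Y ξ = m / alphaC m p σ * (f ξ ^ (m - 2) * deriv f ξ / ξ))
    (hZ : ∀ ξ : ℝ, Z ξ = m / alphaC m p σ ^ 2 * (ξ ^ (σ - 2) * f ξ ^ (m + p - 2))) :
    ∀ ξ ∈ Ioo a b,
      m * f ξ ^ (m - 1) / (alphaC m p σ * ξ) * deriv X ξ
          = X ξ * ((m - 1) * Y ξ - 2 * X ξ) ∧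
      m * f ξ ^ (m - 1) / (alphaC m p σ * ξ) * deriv Y ξ
          = -(Y ξ) ^ 2 - betaC m p σ / alphaC m p σ * Y ξ + X ξ - (N : ℝ) * X ξ * Y ξ - Z ξ ∧
      m * f ξ ^ (m - 1) / (alphaC m p σ * ξ) * deriv Z ξ
          = Z ξ * ((m + p - 2) * Y ξ + (σ - 2) * X ξ) := by
  obtain rfl : X = phaseX m (alphaC m p σ) f := funext hX
  obtain rfl : Y = phaseY m (alphaC m p σ) f := funext hY
  obtain rfl : Z = phaseZ m p σ (alphaC m p σ) f := funext hZ
  intro ξ hξ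
  have hξ0 : 0 < ξ := ha.trans_lt hξ.1
  have hnhds : Ioo a b ∈ 𝓝 ξ := isOpen_Ioo.mem_nhds hξ
  have hdiff : ∀ᶠ x in 𝓝 ξ, DifferentiableAt ℝ f x := eventually_of_mem hnhds fun x hx =>
    (hf.differentiableOn two_ne_zero).differentiableAt (isOpen_Ioo.mem_nhds hx)
  have hdiff' : DifferentiableAt ℝ (deriv f) ξ :=
    ((hf.deriv_of_isOpen isOpen_Ioo le_rfl).differentiableOn one_ne_zero).differentiableAt hnhds
  have hF : f ξ ≠ 0 := (hfpos ξ hξ).ne'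
  exact ⟨phaseTimeScale_mul_deriv_phaseX hdiff.self_of_nhds hF hξ0.ne',
    phaseTimeScale_mul_deriv_phaseY hdiff hdiff' (eventually_of_mem hnhds hfpos) hξ0
      (alphaC_pos hm hp1 hσ).ne' (hode ξ hξ),
    phaseTimeScale_mul_deriv_phaseZ hdiff.self_of_nhds hF hξ0.ne'⟩

theorem phase_space_variables_solve_system (m p σ : ℝ) (N : ℕ) (hm : 1 < m) (hp0 : 0 < p) (hp1 : p < 1)
    (hσ : 2 * (1 - p) / (m - 1) < σ) (hN : 1 ≤ N)
    (a b : ℝ) (ha : 0 ≤ a)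
    (f : ℝ → ℝ) (hfpos : ∀ ξ ∈ Ioo a b, 0 < f ξ)
    (hf : ContDiffOn ℝ 2 f (Ioo a b))
    (hode : ∀ ξ ∈ Ioo a b, SSODE N m p σ f ξ)
    (X Y Z : ℝ → ℝ)
    (hX : ∀ ξ : ℝ, X ξ = m / alphaC m p σ * (f ξ ^ (m - 1) / ξ ^ 2))
    (hY : ∀ ξ : ℝ, Y ξ = m / alphaC m p σ * (f ξ ^ (m - 2) * deriv f ξ / ξ))
    (hZ : ∀ ξ : ℝ, Z ξ = m / alphaC m p σ ^ 2 * (ξ ^ (σ - 2) * f ξ ^ (m + p - 2))) :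
    ∀ ξ ∈ Ioo a b,
      m * f ξ ^ (m - 1) / (alphaC m p σ * ξ) * deriv X ξ
          = X ξ * ((m - 1) * Y ξ - 2 * X ξ) ∧
      m * f ξ ^ (m - 1) / (alphaC m p σ * ξ) * deriv Y ξ
          = -(Y ξ) ^ 2 - betaC m p σ / alphaC m p σ * Y ξ + X ξ - (N : ℝ) * X ξ * Y ξ - Z ξ ∧
      m * f ξ ^ (m - 1) / (alphaC m p σ * ξ) * deriv Z ξ
          = Z ξ * ((m + p - 2) * Y ξ + (σ - 2) * X ξ) :=
  phase_space_variables_solve_system_general m p σ N hm hp1 hσ a b ha f hfpos hf hode X Y Z hX hY hZ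
end

section
/- Assume m + p ≠ 2. Then a point (X,Y,Z) ∈ ℝ³ with X ≥ 0 and Z ≥ 0 is an equilibrium of the system (PSsyst1) — that is, X((m−1)Y − 2X) = 0, −Y² − (β/α)Y + X − NXY − Z = 0 and Z((m+p−2)Y + (σ−2)X) = 0 — if and only if (X,Y,Z) is one of the three points P0 = (0,0,0), P1 = (0, −β/α, 0), P2 = ((m−1)/(2α(mN−N+2)), 1/(α(mN−N+2)), 0). -/
open Real Filter Set Topology

/-!
Write the system as `X (aY - 2X) = 0`, `-Y² - cY + X - nXY - Z = 0`, `Z (qY + sX) = 0`, with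
`a = m - 1`, `c = β/α`, `n = N`, `q = m + p - 2`, `s = σ - 2`.
If `Z ≠ 0`, the first and third equations force `X (2q + as) = 0`; here `2q + as = L > 0`, so
`X = 0`, then `Y = 0` as `q = m + p - 2 ≠ 0`, and the second equation gives `Z = 0` after all.
With `Z = 0` the planar system factors: `X = 0` gives `Y (Y + c) = 0`, and `aY = 2X` turns the
second equation into `Y (a - 2c - (2 + na) Y) = 0`, whose nonzero root is the point `P2`.
-/

section Equilibria

variable {a c n q s X Y Z X₀ Y₀ : ℝ}

theorem z_eq_zero_of_equilibrium (hq : q ≠ 0) (hqs : 2 * q + a * s ≠ 0)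
    (h₁ : X * (a * Y - 2 * X) = 0) (h₂ : -Y ^ 2 - c * Y + X - n * X * Y - Z = 0)
    (h₃ : Z * (q * Y + s * X) = 0) : Z = 0 := by
  rcases mul_eq_zero.mp h₃ with hZ | hqY
  · exact hZ
  have hX : X = 0 := by
    rcases mul_eq_zero.mp h₁ with hX | haY
    · exact hX
    · have : X * (2 * q + a * s) = 0 := by linear_combination a * hqY - q * haY
      exact (mul_eq_zero.mp this).resolve_right hqs
  subst hX
  have hY : Y = 0 := by simpa [hq] using hqY
  subst hY
  linarith

theorem planar_equilibria_iff (hn : 2 + n * a ≠ 0) (hX₀ : 2 * X₀ = a * Y₀)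
    (hY₀ : (2 + n * a) * Y₀ = a - 2 * c) :
    X * (a * Y - 2 * X) = 0 ∧ -Y ^ 2 - c * Y + X - n * X * Y = 0 ↔
      (X = 0 ∧ Y = 0) ∨ (X = 0 ∧ Y = -c) ∨ (X = X₀ ∧ Y = Y₀) := by
  constructor
  · rintro ⟨h₁, h₂⟩
    rcases mul_eq_zero.mp h₁ with rfl | haY
    · have : Y * (Y + c) = 0 := by linear_combination -h₂
      rcases mul_eq_zero.mp this with hY | hY
      · exact Or.inl ⟨rfl, hY⟩
      · exact Or.inr (Or.inl ⟨rfl, by linarith⟩)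
    · have : (Y * (2 + n * a)) * (Y₀ - Y) = 0 := by
        linear_combination 2 * h₂ + (1 - n * Y) * haY + Y * hY₀
      rcases mul_eq_zero.mp this with hY | hY
      · obtain rfl : Y = 0 := (mul_eq_zero.mp hY).resolve_right hn
        exact Or.inl ⟨by linarith, rfl⟩
      · obtain rfl : Y = Y₀ := by linarith
        exact Or.inr (Or.inr ⟨by linarith, rfl⟩)
  · rintro (⟨rfl, rfl⟩ | ⟨rfl, rfl⟩ | ⟨rfl, rfl⟩)
    · constructor <;> ring
    · constructor <;> ring
    · constructor
      · linear_combination (-X) * hX₀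
      · linear_combination (1 - n * Y) / 2 * hX₀ - Y / 2 * hY₀

theorem equilibria_iff (hq : q ≠ 0) (hqs : 2 * q + a * s ≠ 0) (hn : 2 + n * a ≠ 0)
    (hX₀ : 2 * X₀ = a * Y₀) (hY₀ : (2 + n * a) * Y₀ = a - 2 * c) :
    (X * (a * Y - 2 * X) = 0 ∧ -Y ^ 2 - c * Y + X - n * X * Y - Z = 0 ∧
        Z * (q * Y + s * X) = 0) ↔
      ((X, Y, Z) = ((0 : ℝ), (0 : ℝ), (0 : ℝ)) ∨ (X, Y, Z) = ((0 : ℝ), -c, (0 : ℝ)) ∨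
        (X, Y, Z) = (X₀, Y₀, (0 : ℝ))) := by
  simp only [Prod.mk.injEq]
  constructor
  · rintro ⟨h₁, h₂, h₃⟩
    obtain rfl := z_eq_zero_of_equilibrium hq hqs h₁ h₂ h₃
    rw [sub_zero] at h₂
    have := (planar_equilibria_iff hn hX₀ hY₀).1 ⟨h₁, h₂⟩
    tauto
  · intro h
    obtain rfl : Z = 0 := by tauto
    obtain ⟨h₁, h₂⟩ := (planar_equilibria_iff (X := X) (Y := Y) hn hX₀ hY₀).2 (by tauto)
    exact ⟨h₁, by rwa [sub_zero], by rw [zero_mul]⟩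

end Equilibria

section Parameters

variable {m p σ : ℝ}

theorem alphaC_denom_pos (hm : 1 < m) (hσ : 2 * (1 - p) / (m - 1) < σ) :
    0 < σ * (m - 1) + 2 * (p - 1) := by
  rw [div_lt_iff₀ (sub_pos.mpr hm)] at hσ
  linarith

theorem sigma_add_two_pos (hm : 1 < m) (hpm : p < m) (hL : 0 < σ * (m - 1) + 2 * (p - 1)) :
    0 < σ + 2 := by
  have : 0 < (σ + 2) * (m - 1) := by linear_combination hL + 2 * hpm
  exact pos_of_mul_pos_left this (sub_pos.mpr hm).le

theorem betaC_div_alphaC (hL : σ * (m - 1) + 2 * (p - 1) ≠ 0) :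
    betaC m p σ / alphaC m p σ = (m - p) / (σ + 2) :=
  div_div_div_cancel_right₀ hL _ _

end Parameters

theorem equilibria_mp_ne_two_general (m p σ : ℝ) (N : ℕ) (hm : 1 < m) (hp1 : p < 1)
    (hσ : 2 * (1 - p) / (m - 1) < σ)
    (hmp : m + p ≠ 2) :
    ∀ X Y Z : ℝ, 0 ≤ X → 0 ≤ Z →
      ((X * ((m - 1) * Y - 2 * X) = 0 ∧
        -Y ^ 2 - betaC m p σ / alphaC m p σ * Y + X - (N : ℝ) * X * Y - Z = 0 ∧
        Z * ((m + p - 2) * Y + (σ - 2) * X) = 0) ↔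
      ((X, Y, Z) = ((0 : ℝ), (0 : ℝ), (0 : ℝ)) ∨
        (X, Y, Z) = ((0 : ℝ), -(betaC m p σ / alphaC m p σ), (0 : ℝ)) ∨
        (X, Y, Z) = ((m - 1) / (2 * alphaC m p σ * (m * (N : ℝ) - (N : ℝ) + 2)),
          1 / (alphaC m p σ * (m * (N : ℝ) - (N : ℝ) + 2)), (0 : ℝ)))) := by
  intro X Y Z _ _
  have hL := alphaC_denom_pos hm hσ
  have hσ₂ := sigma_add_two_pos hm (hp1.trans hm) hL
  have hK : 0 < 2 + (N : ℝ) * (m - 1) := by have := sub_pos.mpr hm; positivity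
  refine equilibria_iff (fun h => hmp (by linarith)) (by convert hL.ne' using 1; ring) hK.ne'
    (by rw [mul_assoc 2, ← div_div]; ring) ?_
  rw [betaC_div_alphaC hL.ne', alphaC, show m * (N : ℝ) - N + 2 = 2 + N * (m - 1) by ring]
  field_simp
  ring

theorem equilibria_mp_ne_two (m p σ : ℝ) (N : ℕ) (hm : 1 < m) (hp0 : 0 < p) (hp1 : p < 1)
    (hσ : 2 * (1 - p) / (m - 1) < σ) (hN : 1 ≤ N)
    (hmp : m + p ≠ 2) :
    ∀ X Y Z : ℝ, 0 ≤ X → 0 ≤ Z →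
      ((X * ((m - 1) * Y - 2 * X) = 0 ∧
        -Y ^ 2 - betaC m p σ / alphaC m p σ * Y + X - (N : ℝ) * X * Y - Z = 0 ∧
        Z * ((m + p - 2) * Y + (σ - 2) * X) = 0) ↔
      ((X, Y, Z) = ((0 : ℝ), (0 : ℝ), (0 : ℝ)) ∨
        (X, Y, Z) = ((0 : ℝ), -(betaC m p σ / alphaC m p σ), (0 : ℝ)) ∨
        (X, Y, Z) = ((m - 1) / (2 * alphaC m p σ * (m * (N : ℝ) - (N : ℝ) + 2)),
          1 / (alphaC m p σ * (m * (N : ℝ) - (N : ℝ) + 2)), (0 : ℝ)))) :=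
  equilibria_mp_ne_two_general m p σ N hm hp1 hσ hmp
end

section
/- Assume m + p = 2 (so that the assumption on σ reads σ > 2). Then a point (X,Y,Z) ∈ ℝ³ with X ≥ 0 and Z ≥ 0 is an equilibrium of the system (PSsyst1) if and only if either (X,Y,Z) = P2 = ((m−1)/(2α(mN−N+2)), 1/(α(mN−N+2)), 0), or (X,Y,Z) = (0, λ, −λ² − (β/α)λ) for some λ ∈ [−β/α, 0] (the critical parabola). -/
/-!
With `m + p = 2` the third equation degenerates to `(σ - 2) X Z = 0`. If `X = 0`, the second
equation puts `(Y, Z)` on the parabola `Z = -Y² - (β/α) Y`, and `Z ≥ 0` cuts out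
`Y ∈ [-β/α, 0]`. If `X > 0`, then `Y = 2X/(m - 1) ≠ 0` and `Z = 0`, so the second equation
divided by `Y` is linear in `Y`; the identity `α (m - 1) - 2β = 1` solves it as
`Y = 1 / (α (mN - N + 2))`.
-/

open Real Filter Set Topology

lemma sigma_mul_add_pos {m p σ : ℝ} (hm : 1 < m) (hσ : 2 * (1 - p) / (m - 1) < σ) :
    0 < σ * (m - 1) + 2 * (p - 1) := by
  rw [div_lt_iff₀ (by linarith)] at hσ
  linarith

lemma alphaC_mul_sub_two_betaC {m p σ : ℝ} (hL : σ * (m - 1) + 2 * (p - 1) ≠ 0) :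
    alphaC m p σ * (m - 1) - 2 * betaC m p σ = 1 := by
  unfold alphaC betaC
  field_simp
  ring

lemma neg_le_and_nonpos_of_mul_add_nonpos {c l : ℝ} (hc : 0 ≤ c) (h : l * (l + c) ≤ 0) :
    -c ≤ l ∧ l ≤ 0 := by
  constructor <;> nlinarith

/-- The equilibrium equations of (PSsyst1) when `m + p = 2`, with `c` standing for `β / α`. -/
def IsEquilibrium (m σ c N X Y Z : ℝ) : Prop :=
  X * ((m - 1) * Y - 2 * X) = 0 ∧ -Y ^ 2 - c * Y + X - N * X * Y - Z = 0 ∧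
    Z * ((σ - 2) * X) = 0

section Equilibria

variable {m σ a c N X Y Z : ℝ}

lemma IsEquilibrium.of_pos (hσ : σ ≠ 2) (hX : 0 < X) (h : IsEquilibrium m σ c N X Y Z) :
    X = (m - 1) / 2 * Y ∧ Y * (m * N - N + 2) = m - 1 - 2 * c ∧ Z = 0 := by
  obtain ⟨e1, e2, e3⟩ := h
  have hXY : (m - 1) * Y = 2 * X := by
    linarith [(mul_eq_zero.mp e1).resolve_left hX.ne']
  have hY : Y ≠ 0 := by
    rintro rfl
    linarith
  have hZ : Z = 0 := (mul_eq_zero.mp e3).resolve_right (mul_ne_zero (sub_ne_zero.mpr hσ) hX.ne')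
  subst hZ
  refine ⟨by linarith, ?_, rfl⟩
  apply mul_left_cancel₀ hY
  linear_combination (-2) * e2 + (N * Y - 1) * hXY

lemma isEquilibrium_of_mul_eq (hY : Y * (m * N - N + 2) = m - 1 - 2 * c) :
    IsEquilibrium m σ c N ((m - 1) / 2 * Y) Y 0 :=
  ⟨by ring, by linear_combination (-Y / 2) * hY, by ring⟩

lemma mul_eq_iff_eq_one_div (hac : a * (m - 1 - 2 * c) = 1) (hk : m * N - N + 2 ≠ 0) :
    Y * (m * N - N + 2) = m - 1 - 2 * c ↔ Y = 1 / (a * (m * N - N + 2)) := by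
  have ha : a ≠ 0 := left_ne_zero_of_mul_eq_one hac
  rw [eq_div_iff (mul_ne_zero ha hk)]
  constructor <;> intro h
  · linear_combination a * h + hac
  · apply mul_left_cancel₀ ha
    linear_combination h - hac

lemma IsEquilibrium.exists_of_eq_zero (hc : 0 ≤ c) (hZ : 0 ≤ Z)
    (h : IsEquilibrium m σ c N 0 Y Z) :
    ∃ l, -c ≤ l ∧ l ≤ 0 ∧ ((0 : ℝ), Y, Z) = (0, l, -l ^ 2 - c * l) := by
  have hZY : Z = -Y ^ 2 - c * Y := by linarith [h.2.1]
  obtain ⟨hl, hl'⟩ := neg_le_and_nonpos_of_mul_add_nonpos hc (by nlinarith : Y * (Y + c) ≤ 0)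
  exact ⟨Y, hl, hl', by rw [hZY]⟩

lemma isEquilibrium_parabola (l : ℝ) : IsEquilibrium m σ c N 0 l (-l ^ 2 - c * l) :=
  ⟨by ring, by ring, by ring⟩

theorem isEquilibrium_iff (hσ : σ ≠ 2) (hc : 0 ≤ c) (hac : a * (m - 1 - 2 * c) = 1)
    (hk : m * N - N + 2 ≠ 0) (hX : 0 ≤ X) (hZ : 0 ≤ Z) :
    IsEquilibrium m σ c N X Y Z ↔
      (X, Y, Z) = ((m - 1) / (2 * a * (m * N - N + 2)), 1 / (a * (m * N - N + 2)), 0) ∨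
        ∃ l, -c ≤ l ∧ l ≤ 0 ∧ (X, Y, Z) = (0, l, -l ^ 2 - c * l) := by
  have hP2X : (m - 1) / (2 * a * (m * N - N + 2)) = (m - 1) / 2 * (1 / (a * (m * N - N + 2))) := by
    field_simp
  constructor
  · intro h
    rcases hX.eq_or_lt with rfl | hX
    · exact .inr (h.exists_of_eq_zero hc hZ)
    · obtain ⟨rfl, hY, rfl⟩ := h.of_pos hσ hX
      rw [mul_eq_iff_eq_one_div hac hk] at hY
      exact .inl (by rw [hY, hP2X])
  · rintro (hP | ⟨l, -, -, hP⟩)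
    · simp only [Prod.mk.injEq] at hP
      obtain ⟨rfl, rfl, rfl⟩ := hP
      rw [hP2X]
      exact isEquilibrium_of_mul_eq ((mul_eq_iff_eq_one_div hac hk).mpr rfl)
    · simp only [Prod.mk.injEq] at hP
      obtain ⟨rfl, rfl, rfl⟩ := hP
      exact isEquilibrium_parabola _

end Equilibria

theorem equilibria_mp_eq_two_general (m p σ : ℝ) (N : ℕ) (hm : 1 < m)
    (hσ : 2 * (1 - p) / (m - 1) < σ)
    (hmp : m + p = 2) :
    ∀ X Y Z : ℝ, 0 ≤ X → 0 ≤ Z →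
      ((X * ((m - 1) * Y - 2 * X) = 0 ∧
        -Y ^ 2 - betaC m p σ / alphaC m p σ * Y + X - (N : ℝ) * X * Y - Z = 0 ∧
        Z * ((m + p - 2) * Y + (σ - 2) * X) = 0) ↔
      ((X, Y, Z) = ((m - 1) / (2 * alphaC m p σ * (m * (N : ℝ) - (N : ℝ) + 2)),
          1 / (alphaC m p σ * (m * (N : ℝ) - (N : ℝ) + 2)), (0 : ℝ)) ∨
        ∃ l : ℝ, -(betaC m p σ / alphaC m p σ) ≤ l ∧ l ≤ 0 ∧
          (X, Y, Z) = ((0 : ℝ), l, -l ^ 2 - betaC m p σ / alphaC m p σ * l))) := by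
  have hL := sigma_mul_add_pos hm hσ
  -- with `p = 2 - m` the denominator `L` factors as `(m - 1) (σ - 2)`
  have hσ2 : 2 < σ := by nlinarith
  have hα : 0 < alphaC m p σ := div_pos (by linarith) hL
  have hc : 0 ≤ betaC m p σ / alphaC m p σ := div_nonneg (div_nonneg (by linarith) hL.le) hα.le
  have hac : alphaC m p σ * (m - 1 - 2 * (betaC m p σ / alphaC m p σ)) = 1 := by
    have := alphaC_mul_sub_two_betaC hL.ne'
    field_simp
    linarith
  have hk : m * (N : ℝ) - N + 2 ≠ 0 := by nlinarith [N.cast_nonneg (α := ℝ)]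
  intro X Y Z hX hZ
  rw [hmp, sub_self, zero_mul, zero_add]
  exact isEquilibrium_iff hσ2.ne' hc hac hk hX hZ

theorem equilibria_mp_eq_two (m p σ : ℝ) (N : ℕ) (hm : 1 < m) (hp0 : 0 < p) (hp1 : p < 1)
    (hσ : 2 * (1 - p) / (m - 1) < σ) (hN : 1 ≤ N)
    (hmp : m + p = 2) :
    ∀ X Y Z : ℝ, 0 ≤ X → 0 ≤ Z →
      ((X * ((m - 1) * Y - 2 * X) = 0 ∧
        -Y ^ 2 - betaC m p σ / alphaC m p σ * Y + X - (N : ℝ) * X * Y - Z = 0 ∧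
        Z * ((m + p - 2) * Y + (σ - 2) * X) = 0) ↔
      ((X, Y, Z) = ((m - 1) / (2 * alphaC m p σ * (m * (N : ℝ) - (N : ℝ) + 2)),
          1 / (alphaC m p σ * (m * (N : ℝ) - (N : ℝ) + 2)), (0 : ℝ)) ∨
        ∃ l : ℝ, -(betaC m p σ / alphaC m p σ) ≤ l ∧ l ≤ 0 ∧
          (X, Y, Z) = ((0 : ℝ), l, -l ^ 2 - betaC m p σ / alphaC m p σ * l))) :=
  equilibria_mp_eq_two_general m p σ N hm hσ hmp
end

section
/- Let I ⊆ ℝ be an interval and let X, Z : I → ℝ be differentiable functions with Z > 0 on I satisfying the reduced system X'(η) = (1/β) X(η)(X(η) − (m−1)α Z(η)) and Z'(η) = (2/β) X(η) Z(η) for all η ∈ I. Then the function η ↦ (X(η) + (m−1)α Z(η))/√(Z(η)) is constant on I; equivalently, there exists K ∈ ℝ such that X(η) = K √(Z(η)) − (m−1)α Z(η) for all η ∈ I. -/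
open Real Filter Set Topology

/-! Along the flow, `(√Z)' = Z' / (2√Z) = X √Z / β` and `(X + cZ)' = X² / β + c X Z / β`, which is
`X / β` times `X + cZ`; so `X + cZ` and `√Z` have the same logarithmic derivative and their
quotient is constant on the (order-connected) interval. Solving for `X` gives the claim. -/

theorem Convex.is_const_of_hasDerivWithinAt_zero {E : Type*} [NormedAddCommGroup E]
    [NormedSpace ℝ E] {f : ℝ → E} {s : Set ℝ} (hs : Convex ℝ s)
    (hf : ∀ x ∈ s, HasDerivWithinAt f 0 s x) {x y : ℝ} (hx : x ∈ s) (hy : y ∈ s) :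
    f y = f x := by
  have h := hs.norm_image_sub_le_of_norm_hasDerivWithin_le hf (C := 0) (by simp) hx hy
  rwa [zero_mul, norm_le_zero_iff, sub_eq_zero] at h

noncomputable def reducedFirstIntegral (c : ℝ) (X Z : ℝ → ℝ) (η : ℝ) : ℝ :=
  (X η + c * Z η) / √(Z η)

theorem reducedFirstIntegral_deriv_numerator_eq_zero (b c x z s : ℝ) (hsz : s * s = z) :
    (1 / b * x * (x - c * z) + c * (2 / b * x * z)) * s -
      (x + c * z) * (2 / b * x * z / (2 * s)) = 0 := by
  subst hsz
  field_simp
  ring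

theorem hasDerivWithinAt_reducedFirstIntegral {b c : ℝ} {X Z : ℝ → ℝ} {s : Set ℝ} {η : ℝ}
    (hZ : 0 < Z η) (hdX : HasDerivWithinAt X (1 / b * X η * (X η - c * Z η)) s η)
    (hdZ : HasDerivWithinAt Z (2 / b * X η * Z η) s η) :
    HasDerivWithinAt (reducedFirstIntegral c X Z) 0 s η := by
  have hsqrt_ne : √(Z η) ≠ 0 := (Real.sqrt_pos.mpr hZ).ne'
  have h := (hdX.fun_add (hdZ.const_mul c)).fun_div (hdZ.sqrt hZ.ne') hsqrt_ne
  rwa [reducedFirstIntegral_deriv_numerator_eq_zero b c _ _ _ (Real.mul_self_sqrt hZ.le),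
    zero_div] at h

theorem eq_mul_sqrt_sub_of_reducedFirstIntegral_eq {c K : ℝ} {X Z : ℝ → ℝ} {η : ℝ}
    (hZ : 0 < Z η) (h : reducedFirstIntegral c X Z η = K) :
    X η = K * √(Z η) - c * Z η := by
  rw [reducedFirstIntegral, div_eq_iff (Real.sqrt_pos.mpr hZ).ne'] at h
  linarith

theorem reduced_center_manifold_system_first_integral_general (m p σ : ℝ)
    (I : Set ℝ) (hI : I.OrdConnected)
    (X Z : ℝ → ℝ)
    (hZpos : ∀ η ∈ I, 0 < Z η)
    (hdX : ∀ η ∈ I, HasDerivWithinAt X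
      (1 / betaC m p σ * X η * (X η - (m - 1) * alphaC m p σ * Z η)) I η)
    (hdZ : ∀ η ∈ I, HasDerivWithinAt Z (2 / betaC m p σ * X η * Z η) I η) :
    ∃ K : ℝ, ∀ η ∈ I, X η = K * Real.sqrt (Z η) - (m - 1) * alphaC m p σ * Z η := by
  rcases I.eq_empty_or_nonempty with rfl | ⟨η₀, hη₀⟩
  · exact ⟨0, by simp⟩
  refine ⟨reducedFirstIntegral ((m - 1) * alphaC m p σ) X Z η₀, fun η hη => ?_⟩
  refine eq_mul_sqrt_sub_of_reducedFirstIntegral_eq (hZpos η hη) ?_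
  exact hI.convex.is_const_of_hasDerivWithinAt_zero
    (fun x hx => hasDerivWithinAt_reducedFirstIntegral (hZpos x hx) (hdX x hx) (hdZ x hx)) hη₀ hη

theorem reduced_center_manifold_system_first_integral (m p σ : ℝ) (N : ℕ) (hm : 1 < m) (hp0 : 0 < p) (hp1 : p < 1)
    (hσ : 2 * (1 - p) / (m - 1) < σ) (hN : 1 ≤ N)
    (I : Set ℝ) (hI : I.OrdConnected)
    (X Z : ℝ → ℝ)
    (hZpos : ∀ η ∈ I, 0 < Z η)
    (hdX : ∀ η ∈ I, HasDerivWithinAt X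
      (1 / betaC m p σ * X η * (X η - (m - 1) * alphaC m p σ * Z η)) I η)
    (hdZ : ∀ η ∈ I, HasDerivWithinAt Z (2 / betaC m p σ * X η * Z η) I η) :
    ∃ K : ℝ, ∀ η ∈ I, X η = K * Real.sqrt (Z η) - (m - 1) * alphaC m p σ * Z η :=
  reduced_center_manifold_system_first_integral_general m p σ I hI X Z hZpos hdX hdZ
end

section
/- Assume N ≥ 3. Then the set of points (X̄, Ȳ, Z̄) ∈ ℝ³ with X̄ ≥ 0, Z̄ ≥ 0 and X̄² + Ȳ² + Z̄² = 1 satisfying the system X̄Ȳ((N−2)X̄ + mȲ) = 0, X̄Z̄(σX̄ − (1−p)Ȳ) = 0, Z̄Ȳ((m+p−1)Ȳ + (σ+N−2)X̄) = 0 is exactly the five-element set {Q1, Q2, Q3, Q4, Q5}, where Q1 = (1,0,0), Q2 = (0,1,0), Q3 = (0,−1,0), Q4 = (0,0,1) and Q5 = (m/√((N−2)² + m²), −(N−2)/√((N−2)² + m²), 0). -/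
/-! On the plane `X = 0` the third equation reduces to `Z Y² = 0`, leaving `Q2`, `Q3`, `Q4`.
If `X > 0` and `Z > 0`, the second equation gives `σ X = (1 - p) Y > 0`, and then the first one
fails; so `Z = 0`, and the first equation leaves `Y = 0` (the point `Q1`) or the line
`(N - 2) X + m Y = 0`, which meets the half circle `X ≥ 0` only in `Q5`. -/

open Real Filter Set Topology

section UnitCircle

variable {a b x y : ℝ}

lemma eq_unit_of_sq_add_sq_eq_one_of_mul_eq_zero (hy : 0 ≤ y) (h : x ^ 2 + y ^ 2 = 1)
    (hxy : x * y = 0) :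
    (x = 1 ∧ y = 0) ∨ (x = -1 ∧ y = 0) ∨ (x = 0 ∧ y = 1) := by
  rcases mul_eq_zero.1 hxy with rfl | rfl
  · have : y = 1 := (pow_eq_one_iff_of_nonneg hy two_ne_zero).1 (by simpa using h)
    tauto
  · have : x = 1 ∨ x = -1 := sq_eq_one_iff.1 (by simpa using h)
    tauto

lemma eq_div_sqrt_of_mul_add_mul_eq_zero (hb : 0 < b) (hx : 0 ≤ x) (hxy : x ^ 2 + y ^ 2 = 1)
    (h : a * x + b * y = 0) :
    x = b / √(a ^ 2 + b ^ 2) ∧ y = -a / √(a ^ 2 + b ^ 2) := by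
  have hs : 0 < √(a ^ 2 + b ^ 2) := Real.sqrt_pos.2 (by positivity)
  set s := √(a ^ 2 + b ^ 2)
  have hs2 : s ^ 2 = a ^ 2 + b ^ 2 := Real.sq_sqrt (by positivity)
  have hxs : x * s = b := by
    refine (pow_left_inj₀ (by positivity) hb.le two_ne_zero).1 ?_
    linear_combination x ^ 2 * hs2 + b ^ 2 * hxy + (a * x - b * y) * h
  have hys : y * s = -a := mul_left_cancel₀ hb.ne' (by linear_combination s * h - a * hxs)
  exact ⟨(eq_div_iff hs.ne').2 hxs, (eq_div_iff hs.ne').2 hys⟩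

end UnitCircle

lemma eq_zero_of_pos_of_mul_eq_zero {a b c d x y z : ℝ} (ha : 0 ≤ a) (hb : 0 < b) (hc : 0 < c)
    (hd : 0 < d) (hx : 0 < x) (h₁ : x * y * (a * x + b * y) = 0)
    (h₂ : x * z * (c * x - d * y) = 0) : z = 0 := by
  by_contra hz0
  have hcd : c * x - d * y = 0 := by simpa [hx.ne', hz0] using h₂
  have hy : 0 < y := (mul_pos_iff_of_pos_left hd).1 (by linarith [mul_pos hc hx])
  have : 0 < x * y * (a * x + b * y) := by positivity
  exact this.ne' h₁

theorem critical_points_at_infinity (m p σ : ℝ) (N : ℕ)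
    (hm : 1 < m) (hp0 : 0 < p) (hp1 : p < 1) (hσ : 0 < σ) (hN : 3 ≤ N) :
    ∀ X Y Z : ℝ, 0 ≤ X → 0 ≤ Z → X ^ 2 + Y ^ 2 + Z ^ 2 = 1 →
      ((X * Y * (((N : ℝ) - 2) * X + m * Y) = 0 ∧
        X * Z * (σ * X - (1 - p) * Y) = 0 ∧
        Z * Y * ((m + p - 1) * Y + (σ + (N : ℝ) - 2) * X) = 0) ↔
      ((X, Y, Z) = ((1 : ℝ), (0 : ℝ), (0 : ℝ)) ∨
        (X, Y, Z) = ((0 : ℝ), (1 : ℝ), (0 : ℝ)) ∨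
        (X, Y, Z) = ((0 : ℝ), (-1 : ℝ), (0 : ℝ)) ∨
        (X, Y, Z) = ((0 : ℝ), (0 : ℝ), (1 : ℝ)) ∨
        (X, Y, Z) = (m / Real.sqrt (((N : ℝ) - 2) ^ 2 + m ^ 2),
          -((N : ℝ) - 2) / Real.sqrt (((N : ℝ) - 2) ^ 2 + m ^ 2), (0 : ℝ)))) := by
  intro X Y Z hX hZ hsum
  have hN2 : (0 : ℝ) ≤ N - 2 := by
    have : (3 : ℝ) ≤ N := by exact_mod_cast hN
    linarith
  constructor
  · rintro ⟨e₁, e₂, e₃⟩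
    rcases hX.eq_or_lt with rfl | hXpos
    · have hYZ : Y * Z = 0 := by
        have : Z * Y * ((m + p - 1) * Y) = 0 := by simpa using e₃
        simp only [mul_eq_zero, (by linarith : m + p - 1 ≠ 0)] at this ⊢
        tauto
      rcases eq_unit_of_sq_add_sq_eq_one_of_mul_eq_zero hZ (by linarith) hYZ with
        ⟨rfl, rfl⟩ | ⟨rfl, rfl⟩ | ⟨rfl, rfl⟩ <;> simp
    · obtain rfl : Z = 0 :=
        eq_zero_of_pos_of_mul_eq_zero hN2 (by linarith) hσ (by linarith) hXpos e₁ e₂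
      rcases mul_eq_zero.1 e₁ with hXY | hQ₅
      · obtain rfl : Y = 0 := (mul_eq_zero.1 hXY).resolve_left hXpos.ne'
        obtain rfl : X = 1 := (pow_eq_one_iff_of_nonneg hX two_ne_zero).1 (by simpa using hsum)
        simp
      · obtain ⟨rfl, rfl⟩ :=
          eq_div_sqrt_of_mul_add_mul_eq_zero (by linarith) hX (by simpa using hsum) hQ₅
        simp
  · rintro (h | h | h | h | h) <;> obtain ⟨rfl, rfl, rfl⟩ := Prod.mk.injEq _ _ _ _ ▸ h <;>
      exact ⟨by ring, by ring, by ring⟩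
end
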